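/- arXiv:2206.11924 — 7 statements merged into one kernel-verified Lean document; each statement's English description precedes it below -/
import Mathlib

section
/- Let Φ be a monotone NAE-3-SAT instance in which each variable occurs in exactly four clauses, and let G(Φ) be the edge-colored graph constructed from Φ. Then Φ has a not-all-equal truth assignment if and only if the edge set of G(Φ) can be partitioned into two rainbow spanning trees. -/
namespace PackingRainbowStmt0

/-- An edge of the multigraph connects via set `F`: there is an edge in `F` with
endpoints `a` and `b`. -/
def Step {V E : Type*} (ends : E → Sym2 V) (F : Set E) (a b : V) : Prop :=
  ∃ e ∈ F, ends e = s(a, b)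

/-- The edge set `F` makes the multigraph with endpoint map `ends` connected
(any two vertices are joined by a walk using edges of `F`). -/
def Connects {V E : Type*} (ends : E → Sym2 V) (F : Set E) : Prop :=
  ∀ a b : V, Relation.ReflTransGen (Step ends F) a b

/-- `F` is a spanning tree: it connects all vertices, minimally so. -/
def IsSpanningTree {V E : Type*} (ends : E → Sym2 V) (F : Set E) : Prop :=
  Connects ends F ∧ ∀ e ∈ F, ¬ Connects ends (F \ {e})

/-- `F` is rainbow: each color class contains at most one edge of `F`. -/
def Rainbow {E C : Type*} (color : E → C) (F : Set E) : Prop :=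
  ∀ e ∈ F, ∀ f ∈ F, color e = color f → e = f

/-- A monotone NAE-3-SAT instance with `n` variables and `m` clauses in which every
clause contains three distinct variables and every variable occurs in exactly four
clauses.  `occ (j, q) = (i, p)` means that the `q`-th variable of clause `j` is the
variable `i`, and that this is the `p`-th occurrence of `i` in the order of the
clauses.  Bijectivity of `occ` encodes that every variable occurs exactly four times. -/
structure NAE4Instance (n m : ℕ) where
  occ : (Fin m × Fin 3) ≃ (Fin n × Fin 4)
  distinct : ∀ j : Fin m, Function.Injective fun q : Fin 3 => (occ (j, q)).1
  mono : ∀ j q j' q', (occ (j, q)).1 = (occ (j', q')).1 →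
    Prod.Lex (· < ·) (· < ·) (j, q) (j', q') → (occ (j, q)).2 < (occ (j', q')).2

/-- `Φ` has a not-all-equal truth assignment: every clause contains
at least one true and at least one false variable. -/
def HasNAEAssignment {n m : ℕ} (Φ : NAE4Instance n m) : Prop :=
  ∃ a : Fin n → Bool, ∀ j : Fin m,
    (∃ q : Fin 3, a (Φ.occ (j, q)).1 = true) ∧ (∃ q : Fin 3, a (Φ.occ (j, q)).1 = false)

/-- Vertices of the graph `G(Φ)`: for every variable `i` and `p ∈ [4]` the four
vertices `u i p, v i p, w i p, z i p` of a `K₄`; for every clause `j` the triangle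
vertices `c j q`; and the extra vertex `r`. -/
inductive Vtx (n m : ℕ) where
  | u (i : Fin n) (p : Fin 4)
  | v (i : Fin n) (p : Fin 4)
  | w (i : Fin n) (p : Fin 4)
  | z (i : Fin n) (p : Fin 4)
  | c (j : Fin m) (q : Fin 3)
  | r
  deriving DecidableEq, Fintype

/-- Edges of `G(Φ)`: the six edges of each `K₄`; the triangle edges
`c j q — c j (q+1)`; the edges `z^{i_q}_ℓ — c j q`; and two parallel
edges between `r` and each `u i p`. -/
inductive Edg (n m : ℕ) where
  | uv (i : Fin n) (p : Fin 4)
  | uw (i : Fin n) (p : Fin 4)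
  | uz (i : Fin n) (p : Fin 4)
  | vw (i : Fin n) (p : Fin 4)
  | vz (i : Fin n) (p : Fin 4)
  | wz (i : Fin n) (p : Fin 4)
  | tri (j : Fin m) (q : Fin 3)
  | zc (j : Fin m) (q : Fin 3)
  | ru (i : Fin n) (p : Fin 4) (b : Fin 2)
  deriving DecidableEq, Fintype

/-- The colors of the edge-coloring of `G(Φ)`. -/
inductive Col (n m : ℕ) where
  | rpar (i : Fin n) (p : Fin 4)
  | ca (i : Fin n) (p : Fin 4)
  | cb (i : Fin n) (p : Fin 4)
  | cc (i : Fin n) (p : Fin 4)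
  | cd (i : Fin n) (p : Fin 4)
  deriving DecidableEq, Fintype

/-- Endpoints of the edges of `G(Φ)`. -/
def ends {n m : ℕ} (Φ : NAE4Instance n m) : Edg n m → Sym2 (Vtx n m)
  | .uv i p => s(.u i p, .v i p)
  | .uw i p => s(.u i p, .w i p)
  | .uz i p => s(.u i p, .z i p)
  | .vw i p => s(.v i p, .w i p)
  | .vz i p => s(.v i p, .z i p)
  | .wz i p => s(.w i p, .z i p)
  | .tri j q => s(.c j q, .c j (q + 1))
  | .zc j q => s(.z (Φ.occ (j, q)).1 (Φ.occ (j, q)).2, .c j q)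
  | .ru i p _ => s(.r, .u i p)

/-- The edge-coloring of `G(Φ)`: the two parallel edges at `r` to `u i p` form the
class `rpar i p`; the classes corresponding to variable `i` and `p ∈ [4]` are
`ca i p = {w^i_p z^i_p, z^i_p c^{j_p}_{q_p}}`, `cb i p = {v^i_p z^i_p, u^i_{p+1} v^i_{p+1}}`,
`cc i p = {u^i_p z^i_p, v^i_p w^i_p}` and `cd i p = {u^i_p w^i_p, c^{j_p}_{q_p} c^{j_p}_{q_p+1}}`,
where `c^{j_p}_{q_p}` is the triangle neighbor of `z^i_p`, i.e. `(j_p, q_p) = Φ.occ.symm (i, p)`. -/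
def color {n m : ℕ} (Φ : NAE4Instance n m) : Edg n m → Col n m
  | .ru i p _ => .rpar i p
  | .wz i p => .ca i p
  | .zc j q => .ca (Φ.occ (j, q)).1 (Φ.occ (j, q)).2
  | .vz i p => .cb i p
  | .uv i p => .cb i (p - 1)
  | .uz i p => .cc i p
  | .vw i p => .cc i p
  | .uw i p => .cd i p
  | .tri j q => .cd (Φ.occ (j, q)).1 (Φ.occ (j, q)).2

/-- The edge set of `G(Φ)` can be partitioned into the two rainbow
spanning trees `T₁` and `T₂`. -/
def TwoRainbowSpanningTrees {n m : ℕ} (Φ : NAE4Instance n m) (T₁ T₂ : Set (Edg n m)) : Prop :=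
  T₁ ∪ T₂ = Set.univ ∧ Disjoint T₁ T₂ ∧
    IsSpanningTree (ends Φ) T₁ ∧ IsSpanningTree (ends Φ) T₂ ∧
    Rainbow (color Φ) T₁ ∧ Rainbow (color Φ) T₂

/-!
A not-all-equal assignment `a` yields a spanning tree `T`: in the gadget `(i, p)` take the path
`w u z v` if `a i` holds and `u v w z` otherwise, join every `u` to `r` by one of its two
parallel edges, and attach each clause vertex to its `z` if its variable is true and to the
next clause vertex otherwise. Every clause has a true variable, so parents lead to `r`. Each
colour class consists of two edges chosen under opposite conditions, so `Tᶜ` is the same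
construction for `!a` and the other parallel edges (a spanning tree since every clause also
has a false variable), and `T`, `Tᶜ` are both rainbow.

Conversely, if `T` and `Tᶜ` are rainbow spanning trees, no triangle lies inside either. In a
`K₄` gadget this and the colour class `{uz, vw}` force `uw ∈ T ↔ vz ∈ T ↔ uv ∉ T`; the
classes `{vz_p, uv_{p+1}}` carry this around the four gadgets of a variable, so `uw_p ∈ T` is
independent of `p` and defines the assignment. The classes `{uw, triangle edge}` then turn
"no clause triangle is monochromatic" into the not-all-equal condition.
-/

section Multigraph

variable {V E : Type*} {ends : E → Sym2 V} {F : Set E}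

instance : Std.Symm (Step ends F) where
  symm _ _ := fun ⟨e, he, hab⟩ => ⟨e, he, hab.trans Sym2.eq_swap⟩

theorem Connects.diff_singleton {e : E} {a b : V} (hF : Connects ends F)
    (he : ends e = s(a, b)) (hab : Relation.ReflTransGen (Step ends (F \ {e})) a b) :
    Connects ends (F \ {e}) := by
  refine fun x y => Relation.reflTransGen_closed (fun c d hcd => ?_) x y (hF x y)
  obtain ⟨f, hf, hcd⟩ := hcd
  by_cases hfe : f = e
  · subst hfe
    rcases Sym2.eq_iff.mp (hcd.symm.trans he) with ⟨rfl, rfl⟩ | ⟨rfl, rfl⟩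
    exacts [hab, symm hab]
  · exact .single ⟨f, ⟨hf, hfe⟩, hcd⟩

theorem IsSpanningTree.not_triangle {e f g : E} {a b c : V} (hF : IsSpanningTree ends F)
    (he : e ∈ F) (hf : f ∈ F) (hg : g ∈ F) (hef : e ≠ f) (heg : e ≠ g)
    (hab : ends e = s(a, b)) (hbc : ends f = s(b, c)) (hac : ends g = s(a, c)) : False :=
  hF.2 e he <| hF.1.diff_singleton hab <|
    (Relation.ReflTransGen.single ⟨g, ⟨hg, heg.symm⟩, hac⟩).tail
      ⟨f, ⟨hf, hef.symm⟩, hbc.trans Sym2.eq_swap⟩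

theorem triangle_not_monochromatic {T : Set E} (hT : IsSpanningTree ends T)
    (hTc : IsSpanningTree ends Tᶜ) {e f g : E} {a b c : V} (hef : e ≠ f) (heg : e ≠ g)
    (hab : ends e = s(a, b)) (hbc : ends f = s(b, c)) (hac : ends g = s(a, c)) :
    ¬((e ∈ T ↔ f ∈ T) ∧ (f ∈ T ↔ g ∈ T)) := by
  rintro ⟨hTef, hTfg⟩
  by_cases he : e ∈ T
  · exact hT.not_triangle he (hTef.mp he) (hTfg.mp (hTef.mp he)) hef heg hab hbc hac
  · exact hTc.not_triangle he (mt hTef.mpr he) (mt (hTef.trans hTfg).mpr he) hef heg hab hbc hac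

theorem not_connects_of_separating (P : V → Prop) {a b : V} (ha : P a) (hb : ¬P b)
    (hF : ∀ x y, Step ends F x y → P x → P y) : ¬Connects ends F := by
  intro hconn
  apply hb
  clear hb
  induction hconn a b with
  | refl => exact ha
  | tail _ hxy ih => exact hF _ _ hxy ih

theorem isSpanningTree_of_parent (r : V) (parent : V → V) (depth : V → ℕ) (child : E → V)
    (hr : parent r = r) (hdepth : ∀ x ≠ r, depth (parent x) < depth x)
    (hends : ∀ e ∈ F, ends e = s(child e, parent (child e))) (hchild : Set.BijOn child F {r}ᶜ) :
    IsSpanningTree ends F := by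
  have hroot : ∀ x, Relation.ReflTransGen (Step ends F) x r := by
    intro x
    induction x using (measure depth).wf.induction with
    | _ x ih =>
      by_cases hx : x = r
      · rw [hx]
      · obtain ⟨e, he, rfl⟩ := hchild.surjOn hx
        exact .head ⟨e, he, hends e he⟩ (ih _ (hdepth _ hx))
  refine ⟨fun x y => (hroot x).trans (symm (hroot y)), fun e he => ?_⟩
  -- removing `e` cuts the descendants of `child e` off from the root
  refine not_connects_of_separating (fun y => ∃ k, parent^[k] y = child e) (b := r) ⟨0, rfl⟩
    (fun ⟨k, hk⟩ => hchild.mapsTo he (by rw [Function.iterate_fixed hr] at hk; exact hk.symm)) ?_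
  rintro x y ⟨f, ⟨hf, hfe⟩, hxy⟩
  have hne : child f ≠ child e := fun h => hfe (hchild.injOn hf he h)
  have hdesc : (∃ k, parent^[k] (child f) = child e) ↔
      ∃ k, parent^[k] (parent (child f)) = child e := by
    constructor
    · rintro ⟨_ | k, hk⟩
      exacts [absurd hk hne, ⟨k, hk⟩]
    · exact fun ⟨k, hk⟩ => ⟨k + 1, hk⟩
  rcases Sym2.eq_iff.mp ((hends f hf).symm.trans hxy) with ⟨rfl, rfl⟩ | ⟨rfl, rfl⟩
  exacts [hdesc.mp, hdesc.mpr]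

end Multigraph

theorem rainbow_and_rainbow_compl_iff {E C : Type*} {color : E → C} {T : Set E} :
    Rainbow color T ∧ Rainbow color Tᶜ ↔
      ∀ e f, e ≠ f → color e = color f → (e ∈ T ↔ f ∉ T) := by
  constructor
  · rintro ⟨hT, hTc⟩ e f hef hc
    exact ⟨fun he hf => hef (hT e he f hf hc), fun hf => by_contra fun he => hef (hTc e he f hf hc)⟩
  · intro h
    refine ⟨fun e he f hf hc => ?_, fun e he f hf hc => ?_⟩ <;> by_contra hef
    · exact (h e f hef hc).mp he hf
    · exact he ((h e f hef hc).mpr hf)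

theorem Fin.iff_zero_of_forall_add_one_iff {k : ℕ} {P : Fin (k + 1) → Prop}
    (h : ∀ p, P (p + 1) ↔ P p) (p : Fin (k + 1)) : P p ↔ P 0 := by
  induction p using Fin.induction with
  | zero => rfl
  | succ p ih => rw [← Fin.coeSucc_eq_succ, h, ih]

section Construction

variable {n m : ℕ} (Φ : NAE4Instance n m)

/-- The endpoint farther from `r`, in every tree `assignmentTree Φ a β` containing the edge. -/
def Edg.child : Edg n m → Vtx n m
  | .uv i p | .vz i p => .v i p
  | .uw i p | .vw i p => .w i p
  | .uz i p | .wz i p => .z i p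
  | .tri j q | .zc j q => .c j q
  | .ru i p _ => .u i p

def assignmentTree (a : Fin n → Bool) (β : Fin 2) : Set (Edg n m) :=
  {e | match e with
  | .ru _ _ b => b = β
  | .uw i _ | .uz i _ | .vz i _ => a i = true
  | .uv i _ | .vw i _ | .wz i _ => a i = false
  | .zc j q => a (Φ.occ (j, q)).1 = true
  | .tri j q => a (Φ.occ (j, q)).1 = false}

def parent (a : Fin n → Bool) : Vtx n m → Vtx n m
  | .r | .u _ _ => .r
  | .v i p => if a i then .z i p else .u i p
  | .w i p => if a i then .u i p else .v i p
  | .z i p => if a i then .u i p else .w i p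
  | .c j q => if a (Φ.occ (j, q)).1 then .z (Φ.occ (j, q)).1 (Φ.occ (j, q)).2 else .c j (q + 1)

def depth (a : Fin n → Bool) : Vtx n m → ℕ
  | .r => 0
  | .u _ _ => 1
  | .v i _ => if a i then 3 else 2
  | .w i _ => if a i then 2 else 3
  | .z i _ => if a i then 2 else 4
  | .c j q => if a (Φ.occ (j, q)).1 then 3 else if a (Φ.occ (j, q + 1)).1 then 4 else 5

variable {Φ}

theorem depth_parent_lt {a : Fin n → Bool} (ha : ∀ j, ∃ q, a (Φ.occ (j, q)).1 = true) :
    ∀ x ≠ Vtx.r, depth Φ a (parent Φ a x) < depth Φ a x := by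
  intro x hx
  cases x with
  | r => exact absurd rfl hx
  | u => simp [parent, depth]
  | v i | w i | z i => cases h : a i <;> simp [parent, depth, h]
  | c j q =>
    cases h₀ : a (Φ.occ (j, q)).1 <;> cases h₁ : a (Φ.occ (j, q + 1)).1 <;>
      simp [parent, depth, h₀, h₁]
    obtain ⟨q', hq'⟩ := ha j
    have hcyc : ∀ q q' : Fin 3, q' = q ∨ q' = q + 1 ∨ q' = q + 1 + 1 := by decide
    rcases hcyc q q' with rfl | rfl | rfl <;> simp_all

theorem ends_eq_child_parent {a : Fin n → Bool} {β : Fin 2} :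
    ∀ e ∈ assignmentTree Φ a β, ends Φ e = s(e.child, parent Φ a e.child) := by
  rintro (_ | _ | _ | _ | _ | _ | _ | _ | _) he <;>
    simp_all [assignmentTree, Edg.child, parent, ends, Sym2.eq_swap]

theorem child_bijOn (a : Fin n → Bool) (β : Fin 2) :
    Set.BijOn Edg.child (assignmentTree Φ a β) {Vtx.r}ᶜ := by
  refine ⟨fun e _ => by cases e <;> simp [Edg.child], ?_, ?_⟩
  · rintro (_ | _ | _ | _ | _ | _ | _ | _ | _) he (_ | _ | _ | _ | _ | _ | _ | _ | _) hf h <;>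
      simp_all [assignmentTree, Edg.child]
  · rintro (⟨i, p⟩ | ⟨i, p⟩ | ⟨i, p⟩ | ⟨i, p⟩ | ⟨j, q⟩ | _) hx
    · exact ⟨.ru i p β, by simp [assignmentTree], rfl⟩
    · refine ⟨if a i then .vz i p else .uv i p, ?_⟩
      cases h : a i <;> simp [assignmentTree, Edg.child, h]
    · refine ⟨if a i then .uw i p else .vw i p, ?_⟩
      cases h : a i <;> simp [assignmentTree, Edg.child, h]
    · refine ⟨if a i then .uz i p else .wz i p, ?_⟩
      cases h : a i <;> simp [assignmentTree, Edg.child, h]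
    · refine ⟨if a (Φ.occ (j, q)).1 then .zc j q else .tri j q, ?_⟩
      cases h : a (Φ.occ (j, q)).1 <;> simp [assignmentTree, Edg.child, h]
    · exact absurd rfl hx

theorem isSpanningTree_assignmentTree {a : Fin n → Bool} (β : Fin 2)
    (ha : ∀ j, ∃ q, a (Φ.occ (j, q)).1 = true) : IsSpanningTree (ends Φ) (assignmentTree Φ a β) :=
  isSpanningTree_of_parent .r (parent Φ a) (depth Φ a) Edg.child rfl (depth_parent_lt ha)
    ends_eq_child_parent (child_bijOn a β)

theorem compl_assignmentTree (a : Fin n → Bool) :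
    (assignmentTree Φ a 0)ᶜ = assignmentTree Φ (fun i => !a i) 1 := by
  ext (_ | _ | _ | _ | _ | _ | _ | _ | ⟨_, _, b⟩) <;> simp [assignmentTree]
  omega

theorem mem_assignmentTree_iff_not_mem {a : Fin n → Bool} {β : Fin 2} {e f : Edg n m}
    (hef : e ≠ f) (hc : color Φ e = color Φ f) :
    e ∈ assignmentTree Φ a β ↔ f ∉ assignmentTree Φ a β := by
  cases e <;> cases f <;> simp only [color, reduceCtorEq, Col.rpar.injEq, Col.ca.injEq,
    Col.cb.injEq, Col.cc.injEq, Col.cd.injEq, sub_left_inj] at hc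
  all_goals first
    | obtain ⟨rfl, rfl⟩ := hc
    | obtain ⟨rfl, rfl⟩ := Prod.mk.inj (Φ.occ.injective (Prod.ext hc.1 hc.2))
  all_goals first
    | exact absurd rfl hef
    | simp [assignmentTree]
  simp only [ne_eq, Edg.ru.injEq, true_and] at hef
  omega

end Construction

theorem k4_two_coloring {uv uw uz vw vz wz : Prop} (hcc : uz ↔ ¬vw)
    (huvw : ¬((uv ↔ vw) ∧ (vw ↔ uw))) (huvz : ¬((uv ↔ vz) ∧ (vz ↔ uz)))
    (huwz : ¬((uw ↔ wz) ∧ (wz ↔ uz))) (hvwz : ¬((vw ↔ wz) ∧ (wz ↔ vz))) :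
    (uw ↔ vz) ∧ (vz ↔ ¬uv) := by
  by_cases uv <;> by_cases uw <;> by_cases vw <;> by_cases vz <;> by_cases wz <;> simp_all

section Extraction

variable {n m : ℕ} {Φ : NAE4Instance n m} {T : Set (Edg n m)}

theorem gadget_mem_iff (hT : IsSpanningTree (ends Φ) T) (hTc : IsSpanningTree (ends Φ) Tᶜ)
    (hcol : ∀ e f, e ≠ f → color Φ e = color Φ f → (e ∈ T ↔ f ∉ T)) (i : Fin n) (p : Fin 4) :
    (Edg.uw i p ∈ T ↔ Edg.vz i p ∈ T) ∧ (Edg.vz i p ∈ T ↔ Edg.uv i p ∉ T) := by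
  refine k4_two_coloring (uz := Edg.uz i p ∈ T) (vw := Edg.vw i p ∈ T) (wz := Edg.wz i p ∈ T)
    (hcol _ _ (by simp) rfl) ?_ ?_ ?_ ?_ <;>
  exact triangle_not_monochromatic hT hTc (by simp) (by simp) rfl rfl rfl

theorem uw_mem_iff_uw_zero_mem (hT : IsSpanningTree (ends Φ) T)
    (hTc : IsSpanningTree (ends Φ) Tᶜ)
    (hcol : ∀ e f, e ≠ f → color Φ e = color Φ f → (e ∈ T ↔ f ∉ T)) (i : Fin n) (p : Fin 4) :
    Edg.uw i p ∈ T ↔ Edg.uw i 0 ∈ T := by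
  have hgadget := gadget_mem_iff hT hTc hcol i
  have hvz : ∀ p, Edg.vz i (p + 1) ∈ T ↔ Edg.vz i p ∈ T := fun p =>
    (hgadget (p + 1)).2.trans (hcol _ (.uv i (p + 1)) (by simp) (by simp [color])).symm
  have hvz0 := Fin.iff_zero_of_forall_add_one_iff (P := fun p => Edg.vz i p ∈ T) hvz p
  exact (hgadget p).1.trans (hvz0.trans (hgadget 0).1.symm)

theorem hasNAEAssignment_of_isSpanningTree_compl (hT : IsSpanningTree (ends Φ) T)
    (hTc : IsSpanningTree (ends Φ) Tᶜ)
    (hcol : ∀ e f, e ≠ f → color Φ e = color Φ f → (e ∈ T ↔ f ∉ T)) : HasNAEAssignment Φ := by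
  classical
  refine ⟨fun i => decide (Edg.uw i 0 ∈ T), fun j => ?_⟩
  have htri : ∀ q, Edg.tri j q ∈ T ↔ Edg.uw (Φ.occ (j, q)).1 0 ∉ T := fun q =>
    (hcol (.tri j q) (.uw _ _) (by simp) rfl).trans
      (not_congr (uw_mem_iff_uw_zero_mem hT hTc hcol _ _))
  have hclause := triangle_not_monochromatic hT hTc (e := .tri j 0) (f := .tri j 1)
    (g := .tri j 2) (by simp) (by simp) rfl rfl Sym2.eq_swap
  simp only [htri] at hclause
  simp only [decide_eq_true_iff, decide_eq_false_iff_not, Fin.exists_fin_succ]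
  tauto

end Extraction

/-- `Φ` has a not-all-equal truth assignment if and only if the edge
set of the edge-colored graph `G(Φ)` can be partitioned into two rainbow spanning trees. -/
theorem nae_iff_two_rainbow_spanning_trees {n m : ℕ} (Φ : NAE4Instance n m) :
    HasNAEAssignment Φ ↔ ∃ T₁ T₂ : Set (Edg n m), TwoRainbowSpanningTrees Φ T₁ T₂ := by
  constructor
  · rintro ⟨a, ha⟩
    refine ⟨_, _, Set.union_compl_self _, disjoint_compl_right,
      isSpanningTree_assignmentTree 0 fun j => (ha j).1, ?_,
      rainbow_and_rainbow_compl_iff.mpr fun e f => mem_assignmentTree_iff_not_mem⟩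
    rw [compl_assignmentTree]
    exact isSpanningTree_assignmentTree 1 fun j => by simpa using (ha j).2
  · rintro ⟨T, T₂, hunion, hdisj, hT, hT₂, hrainbow, hrainbow₂⟩
    obtain rfl : T₂ = Tᶜ := (IsCompl.of_eq hdisj.eq_bot hunion).compl_eq.symm
    exact hasNAEAssignment_of_isSpanningTree_compl hT hT₂
      (rainbow_and_rainbow_compl_iff.mp ⟨hrainbow, hrainbow₂⟩)

end PackingRainbowStmt0
end

section
/- Let G=(V,E) be an edge-colored graph whose edge set is the disjoint union of two spanning trees, in which each color class contains exactly two edges, and let D=(U,A) be the digraph constructed from G. Then the edge set of G can be partitioned into two rainbow spanning trees if and only if A can be partitioned into two weakly connected spanning subgraphs such that every vertex u∈U−r has positive in-degree in both of them. -/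
/-!
For `⇒`, a partition `(S₁, S₂)` into rainbow spanning trees gives side `i` of the arc
partition: the images of `Sᵢ`, the arcs leaving the `w c` for the edges of the other tree, and one
copy of every parallel pair and loop. `Sᵢ` joins all the vertices `v^out`, and since `Sᵢ` is
rainbow, every colour class has an edge in the other tree, which attaches `w c` on side `i`.

For `⇐`, `v^in_j` is entered only by the image of the edge `e` with head `v` and slot `j` and by
the arc from `w (color e)`, so positive in-degree on both sides puts these two arcs on opposite
sides. If both edges of a colour class had their images on side `i`, then `w c` would be attached
only by loops there; hence the edges `Sᵢ` with image on side `i` are rainbow. Contracting every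
gadget to a vertex of `G` (`w c` to the head of its unique arc on side `i`) turns the
connectivity of side `i` into that of `Sᵢ`. Two connected edge sets sharing the `2 (|V| - 1)`
edges of two spanning trees are spanning trees themselves.
-/

namespace DigraphStmt6

/-- An edge of the multigraph connects via set `F`. -/
def Step {V E : Type*} (ends : E → Sym2 V) (F : Set E) (a b : V) : Prop :=
  ∃ e ∈ F, ends e = s(a, b)

/-- The edge set `F` connects the whole multigraph with endpoint map `ends`. -/
def Connects {V E : Type*} (ends : E → Sym2 V) (F : Set E) : Prop :=
  ∀ a b : V, Relation.ReflTransGen (Step ends F) a b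

/-- `F` is a spanning tree: it connects all vertices, minimally so. -/
def IsSpanningTree {V E : Type*} (ends : E → Sym2 V) (F : Set E) : Prop :=
  Connects ends F ∧ ∀ e ∈ F, ¬ Connects ends (F \ {e})

/-- `F` is rainbow: each color class contains at most one edge of `F`. -/
def Rainbow {E C : Type*} (color : E → C) (F : Set E) : Prop :=
  ∀ e ∈ F, ∀ f ∈ F, color e = color f → e = f

/-- The vertex set `U` of the digraph `D`: for every `v ∈ V - r` the vertices
`v^in_1, v^in_2, v^out`; a copy of `r` (`root`); and a vertex `w c` for each color `c`. -/
inductive UVtx (V C : Type*) (r : V) where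
  | vin (v : {x : V // x ≠ r}) (i : Fin 2)
  | vout (v : {x : V // x ≠ r})
  | root
  | w (c : C)

/-- The arc set `A` of the digraph `D`: for every `v ∈ V - r` and `i ∈ [2]` two parallel
arcs (`par v i b`, `b ∈ [2]`) from `v^in_i` to `v^out`; for every edge `e` of `G` its image
arc `img e`; for every edge `e` of `G` an arc `wout e` leaving `w (color e)`; and two
loops `loop c b` at each `w c`. -/
inductive UArc (V E C : Type*) (r : V) where
  | par (v : {x : V // x ≠ r}) (i : Fin 2) (b : Fin 2)
  | img (e : E)
  | wout (e : E)
  | loop (c : C) (b : Fin 2)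

variable {V E C : Type*} [DecidableEq V]

/-- The vertex `x^in_i` of `D`, where `x` is replaced by `root` if `x = r`. -/
def toIn {C : Type*} (r : V) (x : V) (i : Fin 2) : UVtx V C r :=
  if h : x = r then UVtx.root else UVtx.vin ⟨x, h⟩ i

/-- The vertex `x^out` of `D`, where `x^out` is replaced by `root` if `x = r`. -/
def toOut {C : Type*} (r : V) (x : V) : UVtx V C r :=
  if h : x = r then UVtx.root else UVtx.vout ⟨x, h⟩

/-- The tail of an arc of `D`.  Here `o e = (tail, head)` is the orientation of the edge
`e` of `G` and `slot e ∈ [2]` tells whether the image of `e` enters `(head)^in_1` or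
`(head)^in_2`. -/
def arcTail {r : V} (color : E → C) (o : E → V × V) (slot : E → Fin 2) :
    UArc V E C r → UVtx V C r
  | .par v i _ => UVtx.vin v i
  | .img e => toOut r (o e).1
  | .wout e => UVtx.w (color e)
  | .loop c _ => UVtx.w c

/-- The head of an arc of `D`. -/
def arcHead {r : V} (color : E → C) (o : E → V × V) (slot : E → Fin 2) :
    UArc V E C r → UVtx V C r
  | .par v _ _ => UVtx.vout v
  | .img e => toIn r (o e).2 (slot e)
  | .wout e => toIn r (o e).2 (slot e)
  | .loop c _ => UVtx.w c

/-- The endpoints of an arc of `D`, forgetting its direction. -/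
def uEnds {r : V} (color : E → C) (o : E → V × V) (slot : E → Fin 2)
    (a : UArc V E C r) : Sym2 (UVtx V C r) :=
  s(arcTail color o slot a, arcHead color o slot a)

open Relation Set

section Graph

variable {V E : Type*} {ends : E → Sym2 V} {F G : Set E} {a : V}

instance : Std.Symm (Step ends F) :=
  ⟨fun _ _ ⟨e, he, h⟩ => ⟨e, he, h.trans Sym2.eq_swap⟩⟩

lemma Step.mono (hFG : F ⊆ G) {x y : V} : Step ends F x y → Step ends G x y :=
  fun ⟨e, he, h⟩ => ⟨e, hFG he, h⟩

lemma Connects.mono (hFG : F ⊆ G) (hF : Connects ends F) : Connects ends G :=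
  fun x y => ReflTransGen.mono (fun _ _ => Step.mono hFG) x y (hF x y)

lemma connects_of_forall_reflTransGen (h : ∀ v, ReflTransGen (Step ends F) v a) :
    Connects ends F :=
  fun x y => (h x).trans (symm (h y))

lemma Connects.exists_step_ne (hF : Connects ends F) {x y : V} (hxy : x ≠ y) :
    ∃ z ≠ x, Step ends F x z := by
  by_contra! hloop
  have hstuck : ∀ z, ReflTransGen (Step ends F) x z → z = x := by
    intro z hz
    induction hz with
    | refl => rfl
    | tail _ hstep ih => subst ih; exact by_contra fun hne => hloop _ hne hstep
  exact hxy (hstuck y (hF x y)).symm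

lemma reflTransGen_step_map {V' E' : Type*} {ends' : E' → Sym2 V'} {G : Set E'}
    (π : V → V')
    (hπ : ∀ e ∈ F, ∃ x y, ends e = s(x, y) ∧ ReflTransGen (Step ends' G) (π x) (π y))
    {x y : V} (hxy : ReflTransGen (Step ends F) x y) :
    ReflTransGen (Step ends' G) (π x) (π y) := by
  refine ReflTransGen.lift' π (fun u v ⟨e, he, huv⟩ => ?_) x y hxy
  obtain ⟨p, q, hpq, hreach⟩ := hπ e he
  rcases Sym2.eq_iff.1 (hpq.symm.trans huv) with ⟨rfl, rfl⟩ | ⟨rfl, rfl⟩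
  · exact hreach
  · exact symm hreach

lemma Connects.of_map {V' E' : Type*} {ends' : E' → Sym2 V'} {G : Set E'}
    (hF : Connects ends F) (π : V → V') (hsurj : Function.Surjective π)
    (hπ : ∀ e ∈ F, ∃ x y, ends e = s(x, y) ∧ ReflTransGen (Step ends' G) (π x) (π y)) :
    Connects ends' G := by
  intro x' y'
  obtain ⟨x, rfl⟩ := hsurj x'
  obtain ⟨y, rfl⟩ := hsurj y'
  exact reflTransGen_step_map π hπ (hF x y)

def ReachIn (R : V → V → Prop) : ℕ → V → V → Prop
  | 0, a, b => a = b
  | n + 1, a, c => ∃ b, ReachIn R n a b ∧ R b c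

lemma exists_reachIn_of_reflTransGen {R : V → V → Prop} {x y : V} (h : ReflTransGen R x y) :
    ∃ n, ReachIn R n x y := by
  induction h with
  | refl => exact ⟨0, rfl⟩
  | tail _ hstep ih =>
    obtain ⟨n, hn⟩ := ih
    exact ⟨n + 1, _, hn, hstep⟩

def IsParentMap (ends : E → Sym2 V) (a : V) (d : V → ℕ) (p : {v // v ≠ a} → E) : Prop :=
  ∀ v, ∃ u, ends (p v) = s(u, v.1) ∧ d u < d v

lemma Connects.exists_isParentMap (hF : Connects ends F) (a : V) :
    ∃ d p, IsParentMap ends a d p ∧ ∀ v, p v ∈ F := by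
  classical
  have hreach v : ∃ n, ReachIn (Step ends F) n a v := exists_reachIn_of_reflTransGen (hF a v)
  have hparent (v : {v // v ≠ a}) :
      ∃ e ∈ F, ∃ u, ends e = s(u, v.1) ∧ Nat.find (hreach u) < Nat.find (hreach v) := by
    have hspec := Nat.find_spec (hreach v)
    cases hn : Nat.find (hreach v) with
    | zero => rw [hn] at hspec; exact absurd hspec.symm v.2
    | succ n =>
      rw [hn] at hspec
      obtain ⟨u, hu, e, he, hends⟩ := hspec
      exact ⟨e, he, u, hends, Nat.lt_succ_of_le (Nat.find_min' _ hu)⟩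
  choose p hpF hp using hparent
  exact ⟨_, p, hp, hpF⟩

variable {d : V → ℕ} {p : {v // v ≠ a} → E}

lemma IsParentMap.injective (hp : IsParentMap ends a d p) : Function.Injective p := by
  intro v w hvw
  obtain ⟨u, hu, hlt⟩ := hp v
  obtain ⟨u', hu', hlt'⟩ := hp w
  rw [hvw, hu'] at hu
  rcases Sym2.eq_iff.1 hu with ⟨-, h⟩ | ⟨h, h'⟩
  · exact Subtype.ext h.symm
  · subst h h'
    omega

lemma IsParentMap.connects (hp : IsParentMap ends a d p) : Connects ends (range p) := by
  refine connects_of_forall_reflTransGen (a := a) fun v => ?_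
  induction hn : d v using Nat.strong_induction_on generalizing v with
  | _ n ih =>
    by_cases hv : v = a
    · rw [hv]
    obtain ⟨u, hu, hlt⟩ := hp ⟨v, hv⟩
    have hstep : Step ends (range p) v u :=
      ⟨p ⟨v, hv⟩, mem_range_self _, hu.trans Sym2.eq_swap⟩
    exact ReflTransGen.head hstep (ih _ (hn ▸ hlt) u rfl)

lemma IsParentMap.ncard_range_add_one [Finite V] (hp : IsParentMap ends a d p) :
    (range p).ncard + 1 = Nat.card V := by
  have hcompl : Nat.card {v // v ≠ a} = ({a}ᶜ : Set V).ncard := rfl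
  rw [ncard_range_of_injective hp.injective, hcompl, ncard_compl, ncard_singleton]
  have := Nat.card_pos_iff.2 ⟨⟨a⟩, inferInstance⟩
  omega

variable [Finite V]

lemma IsSpanningTree.ncard_add_one [Nonempty V] (hF : IsSpanningTree ends F) :
    F.ncard + 1 = Nat.card V := by
  obtain ⟨d, p, hp, hpF⟩ := hF.1.exists_isParentMap (Classical.arbitrary V)
  have hrange : range p = F := by
    refine (range_subset_iff.2 hpF).antisymm fun f hf => by_contra fun hfp => ?_
    exact hF.2 f hf <|
      hp.connects.mono (range_subset_iff.2 fun v => ⟨hpF v, fun hv => hfp ⟨v, hv⟩⟩)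
  exact hrange ▸ hp.ncard_range_add_one

variable [Finite E]

lemma Connects.card_le_ncard_add_one (hF : Connects ends F) : Nat.card V ≤ F.ncard + 1 := by
  cases isEmpty_or_nonempty V with
  | inl _ => simp
  | inr hV =>
    obtain ⟨d, p, hp, hpF⟩ := hF.exists_isParentMap (Classical.arbitrary V)
    have := ncard_le_ncard (range_subset_iff.2 hpF)
    have := hp.ncard_range_add_one
    omega

lemma isSpanningTree_of_connects_of_ncard (hF : Connects ends F)
    (hcard : F.ncard + 1 = Nat.card V) : IsSpanningTree ends F := by
  refine ⟨hF, fun e he hFe => ?_⟩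
  have := hFe.card_le_ncard_add_one
  rw [ncard_sdiff_singleton_of_mem he] at this
  have := (ncard_pos (toFinite F)).2 ⟨e, he⟩
  omega

/-- The two trees have `2 (|V| - 1)` edges in all, and each connected part needs `|V| - 1`. -/
lemma isSpanningTree_of_connects_of_partition [Nonempty V] {T₁ T₂ S₁ S₂ : Set E}
    (hT : T₁ ∪ T₂ = univ) (hTd : Disjoint T₁ T₂)
    (hT₁ : IsSpanningTree ends T₁) (hT₂ : IsSpanningTree ends T₂)
    (hS : S₁ ∪ S₂ = univ) (hSd : Disjoint S₁ S₂)
    (hS₁ : Connects ends S₁) (hS₂ : Connects ends S₂) :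
    IsSpanningTree ends S₁ ∧ IsSpanningTree ends S₂ := by
  have hsum : S₁.ncard + S₂.ncard = T₁.ncard + T₂.ncard := by
    rw [← ncard_union_eq hSd, ← ncard_union_eq hTd, hS, hT]
  have := hT₁.ncard_add_one
  have := hT₂.ncard_add_one
  have := hS₁.card_le_ncard_add_one
  have := hS₂.card_le_ncard_add_one
  exact ⟨isSpanningTree_of_connects_of_ncard hS₁ (by omega),
    isSpanningTree_of_connects_of_ncard hS₂ (by omega)⟩

end Graph

section Colours

variable {E C : Type*} {color : E → C} {S T : Set E}

lemma Rainbow.mono (hT : Rainbow color T) (hST : S ⊆ T) : Rainbow color S :=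
  fun e he f hf => hT e (hST he) f (hST hf)

lemma Rainbow.exists_mem_compl [Finite E] (hS : Rainbow color S) (hST : S ∪ T = univ) {c : C}
    (hc : 1 < {e | color e = c}.ncard) : ∃ e ∈ T, color e = c := by
  obtain ⟨e, f, he, hf, hne⟩ := (one_lt_ncard_iff (toFinite _)).1 hc
  by_contra! hT
  have hS' (g : E) (hg : color g = c) : g ∈ S :=
    (hST ▸ mem_univ g : g ∈ S ∪ T).resolve_right fun hgT => hT g hgT hg
  exact hne (hS e (hS' e he) f (hS' f hf) (he.trans hf.symm))

lemma exists_mem_eq_of_injOn {n : ℕ} {s : Set E} {f : E → Fin n} (hs : s.ncard = n)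
    (hf : InjOn f s) (i : Fin n) : ∃ e ∈ s, f e = i := by
  have himage : f '' s = univ :=
    eq_of_subset_of_ncard_le (subset_univ _) (by rw [hf.ncard_image, hs, ncard_univ, Nat.card_fin])
  exact (himage.symm ▸ mem_univ i : i ∈ f '' s)

end Colours

section SideArcs

variable {V E C : Type*} {r : V}

def sideArcs (r : V) (S T : Set E) (b : Fin 2) : Set (UArc V E C r) := fun a =>
  match a with
  | .par _ _ b' => b' = b
  | .img e => e ∈ S
  | .wout e => e ∈ T
  | .loop _ b' => b' = b

lemma sideArcs_union_sideArcs {S T : Set E} (hST : S ∪ T = univ) :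
    sideArcs (C := C) r S T 0 ∪ sideArcs r T S 1 = univ := by
  refine eq_univ_of_forall fun a => ?_
  cases a with
  | par _ _ b | loop _ b =>
    show b = 0 ∨ b = 1
    fin_cases b <;> simp
  | img e => exact (hST ▸ mem_univ e : e ∈ S ∪ T)
  | wout e => exact (hST ▸ mem_univ e : e ∈ S ∪ T).symm

lemma disjoint_sideArcs {S T : Set E} (hST : Disjoint S T) :
    Disjoint (sideArcs (C := C) r S T 0) (sideArcs r T S 1) := by
  refine disjoint_left.2 fun a h₀ h₁ => ?_
  cases a with
  | par _ _ b | loop _ b => exact zero_ne_one (h₀.symm.trans h₁)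
  | img e => exact disjoint_left.1 hST h₀ h₁
  | wout e => exact disjoint_left.1 hST h₁ h₀

end SideArcs

section Digraph

variable {V E C : Type*} [DecidableEq V] {r : V} {ends : E → Sym2 V} {color : E → C}
  {o : E → V × V} {slot : E → Fin 2} {x : V} {i : Fin 2} {c : C}

@[simp] lemma toIn_self : toIn (C := C) r r i = .root := dif_pos rfl

lemma toIn_of_ne (hx : x ≠ r) : toIn (C := C) r x i = .vin ⟨x, hx⟩ i := dif_neg hx

@[simp] lemma toOut_self : toOut (C := C) r r = .root := dif_pos rfl

lemma toOut_of_ne (hx : x ≠ r) : toOut (C := C) r x = .vout ⟨x, hx⟩ := dif_neg hx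

@[simp] lemma toIn_ne_w : toIn r x i ≠ UVtx.w c := by
  unfold toIn; split <;> simp

@[simp] lemma toOut_ne_w : toOut r x ≠ UVtx.w c := by
  unfold toOut; split <;> simp

lemma toIn_eq_vin_iff {v : {x // x ≠ r}} {j : Fin 2} :
    toIn (C := C) r x j = .vin v i ↔ x = v ∧ j = i := by
  unfold toIn
  split
  · simp only [reduceCtorEq, false_iff]
    rintro ⟨rfl, -⟩
    exact v.2 ‹_›
  · simp [Subtype.ext_iff]

lemma exists_of_arcHead_eq_vin {a : UArc V E C r} {v : {x // x ≠ r}}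
    (h : arcHead color o slot a = .vin v i) :
    ∃ f, (o f).2 = v ∧ slot f = i ∧ (a = .img f ∨ a = .wout f) := by
  cases a with
  | par | loop => simp [arcHead] at h
  | img f | wout f => exact ⟨f, (toIn_eq_vin_iff.1 h).1, (toIn_eq_vin_iff.1 h).2, by simp⟩

lemma eq_wout_of_uEnds_eq {a : UArc V E C r} {z : UVtx V C r}
    (h : uEnds color o slot a = s(.w c, z)) (hz : z ≠ .w c) :
    ∃ g, a = .wout g ∧ color g = c := by
  cases a with
  | par | img => simp [uEnds, arcTail, arcHead] at h
  | wout g =>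
    rcases Sym2.eq_iff.1 h with ⟨hg, -⟩ | ⟨-, hg⟩
    · exact ⟨g, rfl, UVtx.w.inj hg⟩
    · exact absurd hg toIn_ne_w
  | loop =>
    rcases Sym2.eq_iff.1 h with ⟨hc, hz'⟩ | ⟨hz', hc⟩ <;>
      exact absurd (hz'.symm.trans hc) hz

lemma img_mem_or_wout_mem (hslot : ∀ e f : E, (o e).2 = (o f).2 → slot e = slot f → e = f)
    {F : Set (UArc V E C r)} (hF : ∀ u, u ≠ .root → ∃ a ∈ F, arcHead color o slot a = u)
    {e : E} (he : (o e).2 ≠ r) : .img e ∈ F ∨ .wout e ∈ F := by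
  obtain ⟨a, ha, hhead⟩ := hF (.vin ⟨(o e).2, he⟩ (slot e)) (by simp)
  obtain ⟨f, hfe, hfs, rfl | rfl⟩ := exists_of_arcHead_eq_vin hhead <;>
    obtain rfl := hslot f e hfe hfs
  exacts [.inl ha, .inr ha]

lemma wout_preimage_subset_img_preimage
    (hslot : ∀ e f : E, (o e).2 = (o f).2 → slot e = slot f → e = f)
    (hr : ∀ e, (o e).2 ≠ r) {F F' : Set (UArc V E C r)} (hd : Disjoint F F')
    (hF' : ∀ u, u ≠ .root → ∃ a ∈ F', arcHead color o slot a = u) :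
    UArc.wout ⁻¹' F ⊆ UArc.img ⁻¹' F' :=
  fun e he => (img_mem_or_wout_mem hslot hF' (hr e)).resolve_right (disjoint_left.1 hd he)

/-- If both edges of the colour class `c` have their image arcs in `F`, then both arcs leaving
`w c` lie in the other side, and `w c` is cut off from the root in `F`. -/
lemma rainbow_img_preimage [Finite E]
    (hslot : ∀ e f : E, (o e).2 = (o f).2 → slot e = slot f → e = f)
    (hr : ∀ e, (o e).2 ≠ r) (hcol : ∀ c, {e | color e = c}.ncard ≤ 2)
    {F F' : Set (UArc V E C r)} (hF : Connects (uEnds color o slot) F) (hd : Disjoint F F')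
    (hF' : ∀ u, u ≠ .root → ∃ a ∈ F', arcHead color o slot a = u) :
    Rainbow color (UArc.img ⁻¹' F) := by
  intro e he f hf hef
  by_contra hne
  obtain ⟨z, hz, a, ha, hends⟩ := hF.exists_step_ne (x := .w (color e)) (y := .root) (by simp)
  obtain ⟨g, rfl, hg⟩ := eq_wout_of_uEnds_eq hends hz
  have hclass : ({e, f} : Set E) = {g | color g = color e} :=
    eq_of_subset_of_ncard_le (by rintro _ (rfl | rfl) <;> simp [hef])
      (by rw [ncard_pair hne]; exact hcol _)
  have hgF : UArc.img g ∈ F := by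
    rcases (hclass ▸ hg : g ∈ ({e, f} : Set E)) with rfl | rfl <;> assumption
  have hgF' := (img_mem_or_wout_mem hslot hF' (hr g)).resolve_left (disjoint_left.1 hd hgF)
  exact disjoint_left.1 hd ha hgF'

lemma connects_img_preimage (ho : ∀ e, s((o e).1, (o e).2) = ends e)
    {F : Set (UArc V E C r)} (hF : Connects (uEnds color o slot) F)
    (hw : Rainbow color (UArc.wout ⁻¹' F)) : Connects ends (UArc.img ⁻¹' F) := by
  classical
  -- `w c` goes to the head of the unique edge `g` of colour `c` whose arc `w c → g` is in `F`.
  let π : UVtx V C r → V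
    | .vin v _ => v
    | .vout v => v
    | .root => r
    | .w c => if h : ∃ g, color g = c ∧ UArc.wout g ∈ F then (o h.choose).2 else r
  have hπout (x : V) : π (toOut r x) = x := by
    by_cases hx : x = r
    · subst hx; simp [π]
    · simp [π, toOut_of_ne hx]
  have hπin (x : V) (i : Fin 2) : π (toIn r x i) = x := by
    by_cases hx : x = r
    · subst hx; simp [π]
    · simp [π, toIn_of_ne hx]
  refine hF.of_map π (fun x => ⟨toOut r x, hπout x⟩) fun a ha => ⟨_, _, rfl, ?_⟩
  cases a with
  | par | loop => exact .refl
  | img e =>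
    show ReflTransGen _ (π (toOut r (o e).1)) (π (toIn r (o e).2 (slot e)))
    rw [hπout, hπin]
    exact .single ⟨e, ha, (ho e).symm⟩
  | wout e =>
    have hex : ∃ g, color g = color e ∧ UArc.wout g ∈ F := ⟨e, rfl, ha⟩
    have hπw : π (.w (color e)) = (o e).2 := by
      simp only [π, dif_pos hex]
      rw [hw _ hex.choose_spec.2 _ ha hex.choose_spec.1]
    show ReflTransGen _ (π (.w (color e))) (π (toIn r (o e).2 (slot e)))
    rw [hπw, hπin]

lemma connects_sideArcs (ho : ∀ e, s((o e).1, (o e).2) = ends e) {S T : Set E}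
    (hS : Connects ends S) (hT : ∀ c, ∃ e ∈ T, color e = c) (b : Fin 2) :
    Connects (uEnds color o slot) (sideArcs r S T b) := by
  set F := sideArcs (C := C) r S T b
  have hin (x : V) (i : Fin 2) :
      ReflTransGen (Step (uEnds color o slot) F) (toIn r x i) (toOut r x) := by
    by_cases hx : x = r
    · rw [hx, toIn_self, toOut_self]
    · rw [toIn_of_ne hx, toOut_of_ne hx]
      exact .single ⟨.par ⟨x, hx⟩ i b, rfl, rfl⟩
  have hout (x : V) : ReflTransGen (Step (uEnds color o slot) F) (toOut r x) .root := by
    simpa using reflTransGen_step_map (toOut r) (fun e he => ⟨_, _, (ho e).symm,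
      (ReflTransGen.single ⟨.img e, he, rfl⟩).trans (hin _ _)⟩) (hS x r)
  have hvout (v : {x // x ≠ r}) : ReflTransGen (Step (uEnds color o slot) F) (.vout v) .root := by
    simpa only [toOut_of_ne v.2] using hout v
  refine connects_of_forall_reflTransGen (a := .root) fun u => ?_
  cases u with
  | vin v i => exact .head ⟨.par v i b, rfl, rfl⟩ (hvout v)
  | vout v => exact hvout v
  | root => exact .refl
  | w c =>
    obtain ⟨e, he, rfl⟩ := hT c
    exact .head ⟨.wout e, he, rfl⟩ ((hin _ _).trans (hout _))

lemma exists_mem_sideArcs_arcHead_eq {S T : Set E} (hST : S ∪ T = univ)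
    (hhead : ∀ v, v ≠ r → ∀ i, ∃ e, (o e).2 = v ∧ slot e = i) (b : Fin 2) :
    ∀ u, u ≠ .root → ∃ a ∈ sideArcs r S T b, arcHead color o slot a = u := by
  intro u hu
  cases u with
  | vin v i =>
    obtain ⟨v, hv⟩ := v
    obtain ⟨e, rfl, rfl⟩ := hhead v hv i
    have hhead_e : toIn r (o e).2 (slot e) = UVtx.vin (C := C) ⟨(o e).2, hv⟩ (slot e) :=
      toIn_of_ne hv
    rcases (hST ▸ mem_univ e : e ∈ S ∪ T) with he | he
    exacts [⟨.img e, he, hhead_e⟩, ⟨.wout e, he, hhead_e⟩]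
  | vout v => exact ⟨.par v 0 b, rfl, rfl⟩
  | root => exact absurd rfl hu
  | w c => exact ⟨.loop c b, rfl, rfl⟩

end Digraph

theorem rainbow_iff_digraph_decomposition_general {V E C : Type*} [DecidableEq V] [Fintype V] [Fintype E]
    (ends : E → Sym2 V) (color : E → C) (r : V)
    (T₁ T₂ : Set E) (hU : T₁ ∪ T₂ = Set.univ) (hD : Disjoint T₁ T₂)
    (h₁ : IsSpanningTree ends T₁) (h₂ : IsSpanningTree ends T₂)
    (hcol : ∀ c : C, {e : E | color e = c}.ncard = 2)
    (o : E → V × V) (ho : ∀ e : E, s((o e).1, (o e).2) = ends e)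
    (hr : {e : E | (o e).2 = r} = ∅)
    (hv : ∀ v : V, v ≠ r → {e : E | (o e).2 = v}.ncard = 2)
    (slot : E → Fin 2)
    (hslot : ∀ e f : E, (o e).2 = (o f).2 → slot e = slot f → e = f) :
    (∃ S₁ S₂ : Set E, S₁ ∪ S₂ = Set.univ ∧ Disjoint S₁ S₂ ∧
      IsSpanningTree ends S₁ ∧ IsSpanningTree ends S₂ ∧ Rainbow color S₁ ∧ Rainbow color S₂) ↔
    (∃ F₁ F₂ : Set (UArc V E C r), F₁ ∪ F₂ = Set.univ ∧ Disjoint F₁ F₂ ∧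
      Connects (uEnds color o slot) F₁ ∧ Connects (uEnds color o slot) F₂ ∧
      (∀ u : UVtx V C r, u ≠ UVtx.root → ∃ a ∈ F₁, arcHead color o slot a = u) ∧
      (∀ u : UVtx V C r, u ≠ UVtx.root → ∃ a ∈ F₂, arcHead color o slot a = u)) := by
  have : Nonempty V := ⟨r⟩
  have hr' : ∀ e, (o e).2 ≠ r := fun e => eq_empty_iff_forall_notMem.1 hr e
  have hhead : ∀ v, v ≠ r → ∀ i, ∃ e, (o e).2 = v ∧ slot e = i := fun v hvr i =>
    exists_mem_eq_of_injOn (hv v hvr) (fun e he f hf => hslot e f (he.trans hf.symm)) i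
  constructor
  · rintro ⟨S₁, S₂, hSU, hSD, hS₁, hS₂, hR₁, hR₂⟩
    have hSU' : S₂ ∪ S₁ = univ := union_comm S₂ S₁ ▸ hSU
    have hcol' c : 1 < {e | color e = c}.ncard := hcol c ▸ one_lt_two
    exact ⟨sideArcs r S₁ S₂ 0, sideArcs r S₂ S₁ 1, sideArcs_union_sideArcs hSU,
      disjoint_sideArcs hSD,
      connects_sideArcs ho hS₁.1 (fun c => hR₁.exists_mem_compl hSU (hcol' c)) 0,
      connects_sideArcs ho hS₂.1 (fun c => hR₂.exists_mem_compl hSU' (hcol' c)) 1,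
      exists_mem_sideArcs_arcHead_eq hSU hhead 0, exists_mem_sideArcs_arcHead_eq hSU' hhead 1⟩
  · rintro ⟨F₁, F₂, hFU, hFD, hC₁, hC₂, hin₁, hin₂⟩
    have hcol' c : {e | color e = c}.ncard ≤ 2 := (hcol c).le
    have hR₁ := rainbow_img_preimage hslot hr' hcol' hC₁ hFD hin₂
    have hR₂ := rainbow_img_preimage hslot hr' hcol' hC₂ hFD.symm hin₁
    have hSU : UArc.img ⁻¹' F₁ ∪ UArc.img ⁻¹' F₂ = univ := by
      rw [← preimage_union, hFU, preimage_univ]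
    obtain ⟨hT₁, hT₂⟩ := isSpanningTree_of_connects_of_partition hU hD h₁ h₂ hSU (hFD.preimage _)
      (connects_img_preimage ho hC₁ (hR₂.mono (wout_preimage_subset_img_preimage hslot hr' hFD hin₂)))
      (connects_img_preimage ho hC₂ (hR₁.mono (wout_preimage_subset_img_preimage hslot hr' hFD.symm hin₁)))
    exact ⟨_, _, hSU, hFD.preimage _, hT₁, hT₂, hR₁, hR₂⟩

/-- Let `G = (V, E)` be an edge-colored graph whose edge set is the
disjoint union of two spanning trees and in which each color class contains exactly two
edges, and let `D = (U, A)` be the digraph constructed from `G` (using an orientation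
`o` of `G` in which `r` has in-degree 0 and every other vertex in-degree 2, and a
labeling `slot` distinguishing the two arcs entering each vertex).  Then the edge set
of `G` can be partitioned into two rainbow spanning trees if and only if `A` can be
partitioned into two weakly connected spanning subgraphs such that every vertex
`u ∈ U - r` has positive in-degree in both of them. -/
theorem rainbow_iff_digraph_decomposition {V E C : Type*} [DecidableEq V] [Fintype V] [Fintype E] [Fintype C]
    (ends : E → Sym2 V) (color : E → C) (r : V)
    (T₁ T₂ : Set E) (hU : T₁ ∪ T₂ = Set.univ) (hD : Disjoint T₁ T₂)
    (h₁ : IsSpanningTree ends T₁) (h₂ : IsSpanningTree ends T₂)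
    (hcol : ∀ c : C, {e : E | color e = c}.ncard = 2)
    (o : E → V × V) (ho : ∀ e : E, s((o e).1, (o e).2) = ends e)
    (hr : {e : E | (o e).2 = r} = ∅)
    (hv : ∀ v : V, v ≠ r → {e : E | (o e).2 = v}.ncard = 2)
    (slot : E → Fin 2)
    (hslot : ∀ e f : E, (o e).2 = (o f).2 → slot e = slot f → e = f) :
    (∃ S₁ S₂ : Set E, S₁ ∪ S₂ = Set.univ ∧ Disjoint S₁ S₂ ∧
      IsSpanningTree ends S₁ ∧ IsSpanningTree ends S₂ ∧ Rainbow color S₁ ∧ Rainbow color S₂) ↔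
    (∃ F₁ F₂ : Set (UArc V E C r), F₁ ∪ F₂ = Set.univ ∧ Disjoint F₁ F₂ ∧
      Connects (uEnds color o slot) F₁ ∧ Connects (uEnds color o slot) F₂ ∧
      (∀ u : UVtx V C r, u ≠ UVtx.root → ∃ a ∈ F₁, arcHead color o slot a = u) ∧
      (∀ u : UVtx V C r, u ≠ UVtx.root → ∃ a ∈ F₂, arcHead color o slot a = u)) :=
  rainbow_iff_digraph_decomposition_general ends color r T₁ T₂ hU hD h₁ h₂ hcol o ho hr hv slot
    hslot

end DigraphStmt6
end

section
/- Let G=(V,E) be an edge-colored graph whose edge set is the disjoint union of two spanning trees, in which each color class contains exactly two edges, and let D=(U,A) be the digraph constructed from G. If the edge set of G can be partitioned into two rainbow spanning trees, then A can be partitioned into two weakly connected spanning subgraphs such that every vertex u∈U−r has positive in-degree in both of them. -/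
/-!
Write the two rainbow spanning trees as `S` and `Sᶜ`. The first part of `A` takes one of the two
parallel arcs into each `v^out`, one loop at each `w_c`, the image arcs of the edges in `S` and the
arcs `w_c → v^in_p` of the edges in `Sᶜ`; the second part is the complement. In either part each
`v^in_i` is joined to `v^out`, and the image arcs of a spanning tree join every `v^out` to the root.
Each color class has exactly one edge in each rainbow tree, so every `w_c` keeps an arc in both
parts. The unique edge entering `v^in_i` gives its image arc to one part and its `w_c`-arc to the
other, so every vertex other than the root has an in-arc in both parts.
-/

namespace DigraphStmt7

/-- An edge of the multigraph connects via set `F`. -/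
def Step {V E : Type*} (ends : E → Sym2 V) (F : Set E) (a b : V) : Prop :=
  ∃ e ∈ F, ends e = s(a, b)

/-- The edge set `F` connects the whole multigraph with endpoint map `ends`. -/
def Connects {V E : Type*} (ends : E → Sym2 V) (F : Set E) : Prop :=
  ∀ a b : V, Relation.ReflTransGen (Step ends F) a b

/-- `F` is a spanning tree: it connects all vertices, minimally so. -/
def IsSpanningTree {V E : Type*} (ends : E → Sym2 V) (F : Set E) : Prop :=
  Connects ends F ∧ ∀ e ∈ F, ¬ Connects ends (F \ {e})

/-- `F` is rainbow: each color class contains at most one edge of `F`. -/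
def Rainbow {E C : Type*} (color : E → C) (F : Set E) : Prop :=
  ∀ e ∈ F, ∀ f ∈ F, color e = color f → e = f

/-- The vertex set `U` of the digraph `D`: for every `v ∈ V - r` the vertices
`v^in_1, v^in_2, v^out`; a copy of `r` (`root`); and a vertex `w c` for each color `c`. -/
inductive UVtx (V C : Type*) (r : V) where
  | vin (v : {x : V // x ≠ r}) (i : Fin 2)
  | vout (v : {x : V // x ≠ r})
  | root
  | w (c : C)

/-- The arc set `A` of the digraph `D`: for every `v ∈ V - r` and `i ∈ [2]` two parallel
arcs (`par v i b`, `b ∈ [2]`) from `v^in_i` to `v^out`; for every edge `e` of `G` its image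
arc `img e`; for every edge `e` of `G` an arc `wout e` leaving `w (color e)`; and two
loops `loop c b` at each `w c`. -/
inductive UArc (V E C : Type*) (r : V) where
  | par (v : {x : V // x ≠ r}) (i : Fin 2) (b : Fin 2)
  | img (e : E)
  | wout (e : E)
  | loop (c : C) (b : Fin 2)

variable {V E C : Type*} [DecidableEq V]

/-- The vertex `x^in_i` of `D`, where `x` is replaced by `root` if `x = r`. -/
def toIn {C : Type*} (r : V) (x : V) (i : Fin 2) : UVtx V C r :=
  if h : x = r then UVtx.root else UVtx.vin ⟨x, h⟩ i

/-- The vertex `x^out` of `D`, where `x^out` is replaced by `root` if `x = r`. -/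
def toOut {C : Type*} (r : V) (x : V) : UVtx V C r :=
  if h : x = r then UVtx.root else UVtx.vout ⟨x, h⟩

/-- The tail of an arc of `D`.  Here `o e = (tail, head)` is the orientation of the edge
`e` of `G` and `slot e ∈ [2]` tells whether the image of `e` enters `(head)^in_1` or
`(head)^in_2`. -/
def arcTail {r : V} (color : E → C) (o : E → V × V) (slot : E → Fin 2) :
    UArc V E C r → UVtx V C r
  | .par v i _ => UVtx.vin v i
  | .img e => toOut r (o e).1
  | .wout e => UVtx.w (color e)
  | .loop c _ => UVtx.w c

/-- The head of an arc of `D`. -/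
def arcHead {r : V} (color : E → C) (o : E → V × V) (slot : E → Fin 2) :
    UArc V E C r → UVtx V C r
  | .par v _ _ => UVtx.vout v
  | .img e => toIn r (o e).2 (slot e)
  | .wout e => toIn r (o e).2 (slot e)
  | .loop c _ => UVtx.w c

/-- The endpoints of an arc of `D`, forgetting its direction. -/
def uEnds {r : V} (color : E → C) (o : E → V × V) (slot : E → Fin 2)
    (a : UArc V E C r) : Sym2 (UVtx V C r) :=
  s(arcTail color o slot a, arcHead color o slot a)

instance {α β : Type*} (ends : β → Sym2 α) (F : Set β) : Std.Symm (Step ends F) where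
  symm _ _ := fun ⟨e, he, h⟩ => ⟨e, he, h.trans Sym2.eq_swap⟩

theorem Connects.of_forall_reflTransGen {α β : Type*} {ends : β → Sym2 α} {F : Set β} (x : α)
    (h : ∀ a, Relation.ReflTransGen (Step ends F) a x) : Connects ends F :=
  fun a b => (h a).trans (symm (h b))

theorem exists_ne_of_ncard_eq_two {α : Type*} {s : Set α} (hs : s.ncard = 2) :
    ∃ a ∈ s, ∃ b ∈ s, a ≠ b :=
  (Set.one_lt_ncard_iff_nontrivial_and_finite.mp (hs ▸ one_lt_two)).1

theorem Rainbow.exists_notMem_of_ncard_eq_two {β γ : Type*} {color : β → γ} {S : Set β} {c : γ}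
    (hS : Rainbow color S) (hc : {e | color e = c}.ncard = 2) : ∃ e, color e = c ∧ e ∉ S := by
  obtain ⟨e, he, f, hf, hef⟩ := exists_ne_of_ncard_eq_two hc
  by_contra! hall
  exact hef (hS e (hall e he) f (hall f hf) (he.trans hf.symm))

theorem exists_eq_slot_eq_of_ncard_eq_two {α β : Type*} {head : β → α} {slot : β → Fin 2}
    (hslot : ∀ e f, head e = head f → slot e = slot f → e = f) {v : α}
    (hv : {e | head e = v}.ncard = 2) (i : Fin 2) : ∃ e, head e = v ∧ slot e = i := by
  obtain ⟨e, he, f, hf, hef⟩ := exists_ne_of_ncard_eq_two hv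
  have hslot_ne : slot e ≠ slot f := fun h => hef (hslot e f (he.trans hf.symm) h)
  obtain hi | hi : i = slot e ∨ i = slot f := by omega
  · exact ⟨e, he, hi.symm⟩
  · exact ⟨f, hf, hi.symm⟩

section Construction

variable {color : E → C} {r : V} {o : E → V × V} {slot : E → Fin 2} {F : Set (UArc V E C r)}

local notation "Reach" => Relation.ReflTransGen (Step (uEnds color o slot) F)

theorem reflTransGen_toIn_toOut (hpar : ∀ v i, ∃ b, UArc.par v i b ∈ F) (x : V) (i : Fin 2) :
    Reach (toIn r x i) (toOut r x) := by
  by_cases hx : x = r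
  · simp only [toIn, toOut, dif_pos hx]
    rfl
  · obtain ⟨b, hb⟩ := hpar ⟨x, hx⟩ i
    refine .single ⟨.par ⟨x, hx⟩ i b, hb, ?_⟩
    simp [uEnds, arcTail, arcHead, toIn, toOut, hx]

theorem reflTransGen_toOut_of_img (hpar : ∀ v i, ∃ b, UArc.par v i b ∈ F) {e : E}
    (he : UArc.img e ∈ F) : Reach (toOut r (o e).1) (toOut r (o e).2) :=
  .head ⟨.img e, he, rfl⟩ (reflTransGen_toIn_toOut hpar _ _)

theorem reflTransGen_toOut_of_connects {ends : E → Sym2 V}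
    (ho : ∀ e, s((o e).1, (o e).2) = ends e) {S : Set E} (hS : Connects ends S)
    (hpar : ∀ v i, ∃ b, UArc.par v i b ∈ F) (himg : ∀ e ∈ S, UArc.img e ∈ F) (x y : V) :
    Reach (toOut r x) (toOut r y) := by
  refine Relation.ReflTransGen.lift' (toOut r) ?_ x y (hS x y)
  rintro a b ⟨e, heS, hab⟩
  have hstep : Reach (toOut r (o e).1) (toOut r (o e).2) :=
    reflTransGen_toOut_of_img hpar (himg e heS)
  rcases Sym2.eq_iff.mp ((ho e).trans hab) with ⟨h₁, h₂⟩ | ⟨h₁, h₂⟩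
  · rwa [← h₁, ← h₂]
  · rw [← h₁, ← h₂]
    exact symm hstep

theorem connects_uEnds {ends : E → Sym2 V} (ho : ∀ e, s((o e).1, (o e).2) = ends e)
    {S : Set E} (hS : Connects ends S) (hpar : ∀ v i, ∃ b, UArc.par v i b ∈ F)
    (himg : ∀ e ∈ S, UArc.img e ∈ F) (hw : ∀ c : C, ∃ e, color e = c ∧ UArc.wout e ∈ F) :
    Connects (uEnds color o slot) F := by
  have hout (x : V) : Reach (toOut r x) .root := by
    simpa [toOut] using reflTransGen_toOut_of_connects ho hS hpar himg x r
  have hin (x : V) (i : Fin 2) : Reach (toIn r x i) .root :=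
    (reflTransGen_toIn_toOut hpar x i).trans (hout x)
  refine .of_forall_reflTransGen .root fun u => ?_
  cases u with
  | vin v i => simpa [toIn, v.2] using hin v i
  | vout v => simpa [toOut, v.2] using hout v
  | root => rfl
  | w c =>
    obtain ⟨e, rfl, he⟩ := hw c
    exact .head ⟨.wout e, he, rfl⟩ (hin _ _)

theorem exists_mem_arcHead_eq (hv : ∀ v : V, v ≠ r → {e : E | (o e).2 = v}.ncard = 2)
    (hslot : ∀ e f : E, (o e).2 = (o f).2 → slot e = slot f → e = f)
    (hpar : ∀ v i, ∃ b, UArc.par v i b ∈ F) (hloop : ∀ c, ∃ b, UArc.loop c b ∈ F)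
    (himg : ∀ e, UArc.img e ∈ F ∨ UArc.wout e ∈ F) {u : UVtx V C r} (hu : u ≠ .root) :
    ∃ a ∈ F, arcHead color o slot a = u := by
  cases u with
  | vin v i =>
    obtain ⟨e, he, rfl⟩ := exists_eq_slot_eq_of_ncard_eq_two hslot (hv v v.2) i
    have hhead : toIn r (o e).2 (slot e) = UVtx.vin (C := C) v (slot e) := by
      rw [toIn, he, dif_neg v.2]
    rcases himg e with h | h
    · exact ⟨.img e, h, hhead⟩
    · exact ⟨.wout e, h, hhead⟩
  | vout v =>
    obtain ⟨b, hb⟩ := hpar v 0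
    exact ⟨.par v 0 b, hb, rfl⟩
  | root => exact absurd rfl hu
  | w c =>
    obtain ⟨b, hb⟩ := hloop c
    exact ⟨.loop c b, hb, rfl⟩

end Construction

def splitArcs (r : V) (S : Set E) : Set (UArc V E C r)
  | .par _ _ b => b = 0
  | .img e => e ∈ S
  | .wout e => e ∉ S
  | .loop _ b => b = 0

theorem digraph_decomposition_of_rainbow_general {V E C : Type*} [DecidableEq V]
    (ends : E → Sym2 V) (color : E → C) (r : V)
    (hcol : ∀ c : C, {e : E | color e = c}.ncard = 2)
    (o : E → V × V) (ho : ∀ e : E, s((o e).1, (o e).2) = ends e)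
    (hv : ∀ v : V, v ≠ r → {e : E | (o e).2 = v}.ncard = 2)
    (slot : E → Fin 2)
    (hslot : ∀ e f : E, (o e).2 = (o f).2 → slot e = slot f → e = f)
    (hrst : ∃ S₁ S₂ : Set E, S₁ ∪ S₂ = Set.univ ∧ Disjoint S₁ S₂ ∧
      IsSpanningTree ends S₁ ∧ IsSpanningTree ends S₂ ∧ Rainbow color S₁ ∧ Rainbow color S₂) :
    ∃ F₁ F₂ : Set (UArc V E C r), F₁ ∪ F₂ = Set.univ ∧ Disjoint F₁ F₂ ∧
      Connects (uEnds color o slot) F₁ ∧ Connects (uEnds color o slot) F₂ ∧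
      (∀ u : UVtx V C r, u ≠ UVtx.root → ∃ a ∈ F₁, arcHead color o slot a = u) ∧
      (∀ u : UVtx V C r, u ≠ UVtx.root → ∃ a ∈ F₂, arcHead color o slot a = u) := by
  obtain ⟨S, S', hU, hD, hS, hS', hrS, hrS'⟩ := hrst
  obtain rfl : S' = Sᶜ := (IsCompl.compl_eq ⟨hD, codisjoint_iff.mpr hU⟩).symm
  refine ⟨splitArcs r S, (splitArcs r S)ᶜ, Set.union_compl_self _, disjoint_compl_right,
    ?_, ?_, fun _ => ?_, fun _ => ?_⟩
  -- membership in `splitArcs r S` and in its complement unfolds to conditions on `S` and `Sᶜ`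
  · exact connects_uEnds ho hS.1 (fun _ _ => ⟨0, rfl⟩) (fun _ he => he)
      fun c => hrS.exists_notMem_of_ncard_eq_two (hcol c)
  · exact connects_uEnds ho hS'.1 (fun _ _ => ⟨1, one_ne_zero⟩) (fun _ he => he)
      fun c => hrS'.exists_notMem_of_ncard_eq_two (hcol c)
  · exact exists_mem_arcHead_eq hv hslot (fun _ _ => ⟨0, rfl⟩) (fun _ => ⟨0, rfl⟩)
      fun e => em (e ∈ S)
  · exact exists_mem_arcHead_eq hv hslot (fun _ _ => ⟨1, one_ne_zero⟩)
      (fun _ => ⟨1, one_ne_zero⟩) fun e => (em (e ∈ S)).symm.imp id not_not_intro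

/-- With `G` and `D` as above: if the edge set of `G` can be
partitioned into two rainbow spanning trees, then `A` can be partitioned into two weakly
connected spanning subgraphs such that every vertex `u ∈ U - r` has positive in-degree
in both of them. -/
theorem digraph_decomposition_of_rainbow {V E C : Type*} [DecidableEq V] [Fintype V] [Fintype E] [Fintype C]
    (ends : E → Sym2 V) (color : E → C) (r : V)
    (T₁ T₂ : Set E) (hU : T₁ ∪ T₂ = Set.univ) (hD : Disjoint T₁ T₂)
    (h₁ : IsSpanningTree ends T₁) (h₂ : IsSpanningTree ends T₂)
    (hcol : ∀ c : C, {e : E | color e = c}.ncard = 2)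
    (o : E → V × V) (ho : ∀ e : E, s((o e).1, (o e).2) = ends e)
    (hr : {e : E | (o e).2 = r} = ∅)
    (hv : ∀ v : V, v ≠ r → {e : E | (o e).2 = v}.ncard = 2)
    (slot : E → Fin 2)
    (hslot : ∀ e f : E, (o e).2 = (o f).2 → slot e = slot f → e = f)
    (hrst : ∃ S₁ S₂ : Set E, S₁ ∪ S₂ = Set.univ ∧ Disjoint S₁ S₂ ∧
      IsSpanningTree ends S₁ ∧ IsSpanningTree ends S₂ ∧ Rainbow color S₁ ∧ Rainbow color S₂) :
    ∃ F₁ F₂ : Set (UArc V E C r), F₁ ∪ F₂ = Set.univ ∧ Disjoint F₁ F₂ ∧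
      Connects (uEnds color o slot) F₁ ∧ Connects (uEnds color o slot) F₂ ∧
      (∀ u : UVtx V C r, u ≠ UVtx.root → ∃ a ∈ F₁, arcHead color o slot a = u) ∧
      (∀ u : UVtx V C r, u ≠ UVtx.root → ∃ a ∈ F₂, arcHead color o slot a = u) :=
  digraph_decomposition_of_rainbow_general ends color r hcol o ho hv slot hslot hrst

end DigraphStmt7
end

section
/- Let G=(V,E) be an edge-colored graph whose edge set is the disjoint union of two spanning trees, in which each color class contains exactly two edges, and let D=(U,A) be the digraph constructed from G. If A can be partitioned into two weakly connected spanning subgraphs such that every vertex u∈U−r has positive in-degree in both of them, then the edge set of G can be partitioned into two rainbow spanning trees. -/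
namespace DigraphStmt8

/-- An edge of the multigraph connects via set `F`. -/
def Step {V E : Type*} (ends : E → Sym2 V) (F : Set E) (a b : V) : Prop :=
  ∃ e ∈ F, ends e = s(a, b)

/-- The edge set `F` connects the whole multigraph with endpoint map `ends`. -/
def Connects {V E : Type*} (ends : E → Sym2 V) (F : Set E) : Prop :=
  ∀ a b : V, Relation.ReflTransGen (Step ends F) a b

/-- `F` is a spanning tree: it connects all vertices, minimally so. -/
def IsSpanningTree {V E : Type*} (ends : E → Sym2 V) (F : Set E) : Prop :=
  Connects ends F ∧ ∀ e ∈ F, ¬ Connects ends (F \ {e})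

/-- `F` is rainbow: each color class contains at most one edge of `F`. -/
def Rainbow {E C : Type*} (color : E → C) (F : Set E) : Prop :=
  ∀ e ∈ F, ∀ f ∈ F, color e = color f → e = f

/-- The vertex set `U` of the digraph `D`: for every `v ∈ V - r` the vertices
`v^in_1, v^in_2, v^out`; a copy of `r` (`root`); and a vertex `w c` for each color `c`. -/
inductive UVtx (V C : Type*) (r : V) where
  | vin (v : {x : V // x ≠ r}) (i : Fin 2)
  | vout (v : {x : V // x ≠ r})
  | root
  | w (c : C)

/-- The arc set `A` of the digraph `D`: for every `v ∈ V - r` and `i ∈ [2]` two parallel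
arcs (`par v i b`, `b ∈ [2]`) from `v^in_i` to `v^out`; for every edge `e` of `G` its image
arc `img e`; for every edge `e` of `G` an arc `wout e` leaving `w (color e)`; and two
loops `loop c b` at each `w c`. -/
inductive UArc (V E C : Type*) (r : V) where
  | par (v : {x : V // x ≠ r}) (i : Fin 2) (b : Fin 2)
  | img (e : E)
  | wout (e : E)
  | loop (c : C) (b : Fin 2)

variable {V E C : Type*} [DecidableEq V]

/-- The vertex `x^in_i` of `D`, where `x` is replaced by `root` if `x = r`. -/
def toIn {C : Type*} (r : V) (x : V) (i : Fin 2) : UVtx V C r :=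
  if h : x = r then UVtx.root else UVtx.vin ⟨x, h⟩ i

/-- The vertex `x^out` of `D`, where `x^out` is replaced by `root` if `x = r`. -/
def toOut {C : Type*} (r : V) (x : V) : UVtx V C r :=
  if h : x = r then UVtx.root else UVtx.vout ⟨x, h⟩

/-- The tail of an arc of `D`.  Here `o e = (tail, head)` is the orientation of the edge
`e` of `G` and `slot e ∈ [2]` tells whether the image of `e` enters `(head)^in_1` or
`(head)^in_2`. -/
def arcTail {r : V} (color : E → C) (o : E → V × V) (slot : E → Fin 2) :
    UArc V E C r → UVtx V C r
  | .par v i _ => UVtx.vin v i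
  | .img e => toOut r (o e).1
  | .wout e => UVtx.w (color e)
  | .loop c _ => UVtx.w c

/-- The head of an arc of `D`. -/
def arcHead {r : V} (color : E → C) (o : E → V × V) (slot : E → Fin 2) :
    UArc V E C r → UVtx V C r
  | .par v _ _ => UVtx.vout v
  | .img e => toIn r (o e).2 (slot e)
  | .wout e => toIn r (o e).2 (slot e)
  | .loop c _ => UVtx.w c

/-- The endpoints of an arc of `D`, forgetting its direction. -/
def uEnds {r : V} (color : E → C) (o : E → V × V) (slot : E → Fin 2)
    (a : UArc V E C r) : Sym2 (UVtx V C r) :=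
  s(arcTail color o slot a, arcHead color o slot a)

/-!
The vertex `v^in_i` entered by the image of an edge `e` has exactly two entering arcs, the image
of `e` and the arc from `w_{c(e)}`; as it has positive in-degree in both halves, each half `F`
contains exactly one of them. Weak connectivity forces every half to contain an arc leaving each
`w_c`, and a color class has only two edges, so `F` contains exactly one arc leaving `w_c`. Hence
two image arcs of one color in `F` would leave `w_c` isolated in `F`: the image edges in `F` are
rainbow. Collapsing each gadget of `D` to its vertex of `G`, and `w_c` to the head of its arc in
`F`, sends every arc of `F` to a loop or to an image edge in `F`, so these edges connect `G`.
Finally, two disjoint connected edge sets in a graph with `2(|V| - 1)` edges have `|V| - 1` edges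
each, so both are spanning trees.
-/

open Relation

lemma eq_pair_of_ncard_eq_two {α : Type*} {s : Set α} {x y : α} (hs : s.ncard = 2)
    (hx : x ∈ s) (hy : y ∈ s) (hne : x ≠ y) : s = {x, y} :=
  (Set.eq_of_subset_of_ncard_le (Set.pair_subset hx hy) (by rw [hs, Set.ncard_pair hne])
    (Set.finite_of_ncard_ne_zero (by omega))).symm

section Multigraph

variable {V E : Type*} {ends : E → Sym2 V} {F : Set E} {e : E} {a b : V}

def toSimpleGraph (ends : E → Sym2 V) (F : Set E) : SimpleGraph V :=
  SimpleGraph.fromEdgeSet (ends '' F)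

lemma toSimpleGraph_adj :
    (toSimpleGraph ends F).Adj a b ↔ Step ends F a b ∧ a ≠ b :=
  SimpleGraph.fromEdgeSet_adj _

lemma Step.reachable (h : Step ends F a b) : (toSimpleGraph ends F).Reachable a b := by
  obtain ⟨e, he, hab⟩ := h
  by_cases hne : a = b
  · exact hne ▸ .rfl
  · exact SimpleGraph.Adj.reachable (toSimpleGraph_adj.2 ⟨⟨e, he, hab⟩, hne⟩)

lemma reflTransGen_step_iff_reachable :
    ReflTransGen (Step ends F) a b ↔ (toSimpleGraph ends F).Reachable a b := by
  refine ⟨fun h => ?_, fun h => ?_⟩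
  · induction h with
    | refl => rfl
    | tail _ hstep ih => exact ih.trans hstep.reachable
  · exact ReflTransGen.mono (fun _ _ hxy => (toSimpleGraph_adj.1 hxy).1) a b
      ((SimpleGraph.reachable_iff_reflTransGen a b).1 h)

lemma connects_iff_preconnected :
    Connects ends F ↔ (toSimpleGraph ends F).Preconnected :=
  forall₂_congr fun _ _ => reflTransGen_step_iff_reachable

lemma Connects.of_map {W E' : Type*} {ends' : E' → Sym2 W} {F' : Set E'} (f : V → W)
    (hf : Function.Surjective f) (h : Connects ends F)
    (hF : ∀ e ∈ F, ∀ x y, ends e = s(x, y) → (toSimpleGraph ends' F').Reachable (f x) (f y)) :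
    Connects ends' F' := by
  intro a b
  obtain ⟨a, rfl⟩ := hf a
  obtain ⟨b, rfl⟩ := hf b
  refine ReflTransGen.lift' f (fun x y ⟨e, he, hxy⟩ => ?_) a b (h a b)
  exact reflTransGen_step_iff_reachable.2 (hF e he x y hxy)

lemma IsSpanningTree.not_preconnected_of_le (hT : IsSpanningTree ends F) (he : e ∈ F)
    {H : SimpleGraph V} (hH : H ≤ toSimpleGraph ends (F \ {e})) : ¬ H.Preconnected :=
  fun hc => hT.2 e he (connects_iff_preconnected.2 (hc.mono hH))

lemma IsSpanningTree.not_isDiag (hT : IsSpanningTree ends F) (he : e ∈ F) :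
    ¬ (ends e).IsDiag := by
  intro hdiag
  refine hT.not_preconnected_of_le he (fun x y hxy => ?_) (connects_iff_preconnected.1 hT.1)
  obtain ⟨⟨g, hg, hgxy⟩, hne⟩ := toSimpleGraph_adj.1 hxy
  refine toSimpleGraph_adj.2 ⟨⟨g, ⟨hg, ?_⟩, hgxy⟩, hne⟩
  rintro rfl
  exact hne (Sym2.mk_isDiag_iff.1 (hgxy ▸ hdiag))

lemma IsSpanningTree.injOn (hT : IsSpanningTree ends F) : Set.InjOn ends F := by
  intro e he f hf hef
  by_contra hne
  refine hT.not_preconnected_of_le he (fun x y hxy => ?_) (connects_iff_preconnected.1 hT.1)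
  obtain ⟨⟨g, hg, hgxy⟩, hxy⟩ := toSimpleGraph_adj.1 hxy
  refine toSimpleGraph_adj.2 ⟨?_, hxy⟩
  by_cases hge : g = e
  · exact ⟨f, ⟨hf, Ne.symm hne⟩, hef ▸ hge ▸ hgxy⟩
  · exact ⟨g, ⟨hg, hge⟩, hgxy⟩

lemma IsSpanningTree.isTree [Nonempty V] (hT : IsSpanningTree ends F) :
    (toSimpleGraph ends F).IsTree := by
  have hconn : (toSimpleGraph ends F).Connected := ⟨connects_iff_preconnected.1 hT.1⟩
  refine ⟨hconn, SimpleGraph.isAcyclic_iff_forall_adj_isBridge.2 fun x y hxy => ?_⟩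
  by_contra hbr
  obtain ⟨⟨e, he, hexy⟩, -⟩ := toSimpleGraph_adj.1 hxy
  refine hT.not_preconnected_of_le he ?_ (hconn.connected_delete_edge_of_not_isBridge hbr).1
  rw [toSimpleGraph, SimpleGraph.deleteEdges_fromEdgeSet, ← hexy]
  refine SimpleGraph.fromEdgeSet_mono ?_
  rintro _ ⟨⟨g, hg, rfl⟩, hne⟩
  exact ⟨g, ⟨hg, fun hge => hne (hge ▸ rfl)⟩, rfl⟩

lemma IsSpanningTree.ncard_add_one [Finite V] [Nonempty V] (hT : IsSpanningTree ends F) :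
    F.ncard + 1 = Nat.card V := by
  have hedges : (toSimpleGraph ends F).edgeSet = ends '' F := by
    rw [toSimpleGraph, SimpleGraph.edgeSet_fromEdgeSet, sdiff_eq_left, Set.disjoint_left]
    rintro _ ⟨e, he, rfl⟩
    exact hT.not_isDiag he
  rw [← (SimpleGraph.isTree_iff_connected_and_card.1 hT.isTree).2, Nat.card_coe_set_eq, hedges,
    hT.injOn.ncard_image]

lemma Connects.card_le_ncard_add_one [Finite V] [Finite E] (h : Connects ends F) :
    Nat.card V ≤ F.ncard + 1 := by
  cases isEmpty_or_nonempty V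
  · simp
  have hconn : (toSimpleGraph ends F).Connected := ⟨connects_iff_preconnected.1 h⟩
  calc Nat.card V ≤ Nat.card (toSimpleGraph ends F).edgeSet + 1 :=
        hconn.card_vert_le_card_edgeSet_add_one
    _ ≤ (ends '' F).ncard + 1 := by
        rw [Nat.card_coe_set_eq]
        gcongr
        · exact Set.toFinite _
        · exact SimpleGraph.edgeSet_fromEdgeSet _ ▸ Set.sdiff_subset
    _ ≤ F.ncard + 1 := by gcongr; exact Set.ncard_image_le (Set.toFinite F)

lemma Connects.isSpanningTree_of_ncard_add_one_le [Finite V] [Finite E] (h : Connects ends F)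
    (hF : F.ncard + 1 ≤ Nat.card V) : IsSpanningTree ends F := by
  refine ⟨h, fun e he hdel => ?_⟩
  have := hdel.card_le_ncard_add_one
  have := Set.ncard_sdiff_singleton_lt_of_mem he (Set.toFinite F)
  omega

theorem isSpanningTree_of_disjoint_connects [Finite V] [Finite E] [Nonempty V]
    {T₁ T₂ S₁ S₂ : Set E} (hT : T₁ ∪ T₂ = Set.univ) (hT₁ : IsSpanningTree ends T₁)
    (hT₂ : IsSpanningTree ends T₂) (hS : Disjoint S₁ S₂) (hS₁ : Connects ends S₁)
    (hS₂ : Connects ends S₂) : IsSpanningTree ends S₁ ∧ IsSpanningTree ends S₂ := by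
  have hE : Nat.card E ≤ T₁.ncard + T₂.ncard := by
    rw [← Set.ncard_univ, ← hT]
    exact Set.ncard_union_le T₁ T₂
  have hS' : S₁.ncard + S₂.ncard ≤ Nat.card E := by
    rw [← Set.ncard_union_eq hS, ← Set.ncard_univ]
    exact Set.ncard_le_ncard (Set.subset_univ _)
  have := hT₁.ncard_add_one
  have := hT₂.ncard_add_one
  have := hS₁.card_le_ncard_add_one
  have := hS₂.card_le_ncard_add_one
  exact ⟨hS₁.isSpanningTree_of_ncard_add_one_le (by omega),
    hS₂.isSpanningTree_of_ncard_add_one_le (by omega)⟩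

end Multigraph

section Digraph

variable {V E C : Type*} [DecidableEq V] {r : V} {color : E → C} {o : E → V × V}
  {slot : E → Fin 2} {F F' : Set (UArc V E C r)} {e f : E}

@[simp]
lemma toIn_ne_w (x : V) (i : Fin 2) (c : C) : toIn r x i ≠ UVtx.w c := by
  unfold toIn; split <;> simp

@[simp]
lemma toOut_ne_w (x : V) (c : C) : toOut r x ≠ UVtx.w c := by
  unfold toOut; split <;> simp

lemma toIn_eq_vin_iff {x : V} {i j : Fin 2} {v : {x : V // x ≠ r}} :
    toIn (C := C) r x i = UVtx.vin v j ↔ x = v ∧ i = j := by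
  unfold toIn
  split
  · rename_i hx
    simp only [reduceCtorEq, false_iff, not_and]
    rintro rfl
    exact absurd hx v.2
  · simp [Subtype.ext_iff]

lemma eq_img_or_eq_wout_of_arcHead_eq
    (hslot : ∀ e f : E, (o e).2 = (o f).2 → slot e = slot f → e = f) (hne : (o e).2 ≠ r)
    {a : UArc V E C r} (ha : arcHead color o slot a = UVtx.vin ⟨(o e).2, hne⟩ (slot e)) :
    a = UArc.img e ∨ a = UArc.wout e := by
  cases a with
  | par v i b => simp [arcHead] at ha
  | img f =>
    obtain ⟨hv, hi⟩ := toIn_eq_vin_iff.1 ha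
    exact .inl (congrArg _ (hslot f e hv hi))
  | wout f =>
    obtain ⟨hv, hi⟩ := toIn_eq_vin_iff.1 ha
    exact .inr (congrArg _ (hslot f e hv hi))
  | loop c b => simp [arcHead] at ha

lemma wout_notMem_of_img_mem
    (hslot : ∀ e f : E, (o e).2 = (o f).2 → slot e = slot f → e = f) (hne : (o e).2 ≠ r)
    (hd : Disjoint F F') (hin' : ∀ u, u ≠ UVtx.root → ∃ a ∈ F', arcHead color o slot a = u)
    (he : UArc.img e ∈ F) : UArc.wout e ∉ F := by
  intro hw
  obtain ⟨a, haF', ha⟩ := hin' _ (nomatch · : UVtx.vin ⟨(o e).2, hne⟩ (slot e) ≠ UVtx.root)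
  rcases eq_img_or_eq_wout_of_arcHead_eq hslot hne ha with rfl | rfl
  · exact Set.disjoint_left.1 hd he haF'
  · exact Set.disjoint_left.1 hd hw haF'

lemma exists_wout_mem_of_connects (hF : Connects (uEnds color o slot) F) (c : C) :
    ∃ e, color e = c ∧ UArc.wout e ∈ F := by
  by_contra! hno
  have hstuck : ∀ z, ReflTransGen (Step (uEnds color o slot) F) (UVtx.w c) z → z = UVtx.w c := by
    intro z hz
    induction hz with
    | refl => rfl
    | tail _ hstep ih =>
      subst ih
      obtain ⟨a, haF, hends⟩ := hstep
      cases a <;> rcases Sym2.eq_iff.1 hends with ⟨h₁, h₂⟩ | ⟨h₁, h₂⟩ <;>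
        simp_all [arcTail, arcHead]
  simpa using hstuck _ (hF _ UVtx.root)

lemma wout_mem_or_wout_mem_of_connects (hF : Connects (uEnds color o slot) F)
    (hclass : {g | color g = color e} ⊆ {e, f}) : UArc.wout e ∈ F ∨ UArc.wout f ∈ F := by
  obtain ⟨g, hg, hgF⟩ := exists_wout_mem_of_connects hF (color e)
  rcases hclass hg with rfl | rfl
  exacts [.inl hgF, .inr hgF]

lemma rainbow_img (hF : Connects (uEnds color o slot) F)
    (hpair : ∀ e f, e ≠ f → color e = color f → {g | color g = color e} ⊆ {e, f})
    (hexcl : ∀ e, UArc.img e ∈ F → UArc.wout e ∉ F) :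
    Rainbow color {e | UArc.img e ∈ F} := by
  intro e he f hf hef
  by_contra hne
  rcases wout_mem_or_wout_mem_of_connects hF (hpair e f hne hef) with h | h
  exacts [hexcl e he h, hexcl f hf h]

def proj (κ : C → V) : UVtx V C r → V
  | .vin v _ => v
  | .vout v => v
  | .root => r
  | .w c => κ c

@[simp]
lemma proj_toIn (κ : C → V) (x : V) (i : Fin 2) : proj κ (toIn (C := C) r x i) = x := by
  unfold toIn; split <;> simp_all [proj]

@[simp]
lemma proj_toOut (κ : C → V) (x : V) : proj κ (toOut (C := C) r x) = x := by
  unfold toOut; split <;> simp_all [proj]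

lemma connects_img_of_proj {ends : E → Sym2 V} (ho : ∀ e : E, s((o e).1, (o e).2) = ends e)
    (hF : Connects (uEnds color o slot) F) {κ : C → V}
    (hκ : ∀ f, UArc.wout f ∈ F → κ (color f) = (o f).2) :
    Connects ends {e | UArc.img e ∈ F} := by
  have harc : ∀ a ∈ F, (toSimpleGraph ends {e | UArc.img e ∈ F}).Reachable
      (proj κ (arcTail color o slot a)) (proj κ (arcHead color o slot a)) := by
    intro a ha
    cases a with
    | img f => simpa [arcTail, arcHead] using Step.reachable ⟨f, ha, (ho f).symm⟩
    | wout f =>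
      change (toSimpleGraph _ _).Reachable (κ (color f)) (proj κ (toIn r _ _))
      rw [proj_toIn, hκ f ha]
    | par | loop => simp [arcTail, arcHead, proj]
  refine hF.of_map (proj κ) (fun x => ⟨toOut r x, proj_toOut κ x⟩) fun a ha x y hxy => ?_
  rcases Sym2.eq_iff.1 hxy with ⟨rfl, rfl⟩ | ⟨rfl, rfl⟩
  exacts [harc a ha, (harc a ha).symm]

lemma connects_img {ends : E → Sym2 V} (ho : ∀ e : E, s((o e).1, (o e).2) = ends e)
    (hF : Connects (uEnds color o slot) F) (hF' : Connects (uEnds color o slot) F')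
    (hd : Disjoint F F')
    (hpair : ∀ e f, e ≠ f → color e = color f → {g | color g = color e} ⊆ {e, f}) :
    Connects ends {e | UArc.img e ∈ F} := by
  choose g hg hgF using exists_wout_mem_of_connects hF
  refine connects_img_of_proj (κ := fun c => (o (g c)).2) ho hF fun f hf => ?_
  suffices g (color f) = f by rw [this]
  by_contra hne
  rcases wout_mem_or_wout_mem_of_connects hF' (hpair _ _ hne (hg _)) with h | h
  exacts [Set.disjoint_left.1 hd (hgF _) h, Set.disjoint_left.1 hd hf h]

theorem connects_and_rainbow_img {ends : E → Sym2 V}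
    (ho : ∀ e : E, s((o e).1, (o e).2) = ends e) (hnr : ∀ e : E, (o e).2 ≠ r)
    (hslot : ∀ e f : E, (o e).2 = (o f).2 → slot e = slot f → e = f)
    (hpair : ∀ e f, e ≠ f → color e = color f → {g | color g = color e} ⊆ {e, f})
    (hd : Disjoint F F') (hF : Connects (uEnds color o slot) F)
    (hF' : Connects (uEnds color o slot) F')
    (hin' : ∀ u, u ≠ UVtx.root → ∃ a ∈ F', arcHead color o slot a = u) :
    Connects ends {e | UArc.img e ∈ F} ∧ Rainbow color {e | UArc.img e ∈ F} :=
  ⟨connects_img ho hF hF' hd hpair,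
    rainbow_img hF hpair fun e => wout_notMem_of_img_mem hslot (hnr e) hd hin'⟩

end Digraph

theorem rainbow_of_digraph_decomposition_general {V E C : Type*} [DecidableEq V] [Fintype V] [Fintype E]
    (ends : E → Sym2 V) (color : E → C) (r : V)
    (T₁ T₂ : Set E) (hU : T₁ ∪ T₂ = Set.univ)
    (h₁ : IsSpanningTree ends T₁) (h₂ : IsSpanningTree ends T₂)
    (hcol : ∀ c : C, {e : E | color e = c}.ncard = 2)
    (o : E → V × V) (ho : ∀ e : E, s((o e).1, (o e).2) = ends e)
    (hr : {e : E | (o e).2 = r} = ∅)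
    (slot : E → Fin 2)
    (hslot : ∀ e f : E, (o e).2 = (o f).2 → slot e = slot f → e = f)
    (hdec : ∃ F₁ F₂ : Set (UArc V E C r), F₁ ∪ F₂ = Set.univ ∧ Disjoint F₁ F₂ ∧
      Connects (uEnds color o slot) F₁ ∧ Connects (uEnds color o slot) F₂ ∧
      (∀ u : UVtx V C r, u ≠ UVtx.root → ∃ a ∈ F₁, arcHead color o slot a = u) ∧
      (∀ u : UVtx V C r, u ≠ UVtx.root → ∃ a ∈ F₂, arcHead color o slot a = u)) :
    ∃ S₁ S₂ : Set E, S₁ ∪ S₂ = Set.univ ∧ Disjoint S₁ S₂ ∧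
      IsSpanningTree ends S₁ ∧ IsSpanningTree ends S₂ ∧ Rainbow color S₁ ∧ Rainbow color S₂ := by
  obtain ⟨F₁, F₂, hFU, hFD, hc₁, hc₂, hin₁, hin₂⟩ := hdec
  have hnr : ∀ e : E, (o e).2 ≠ r := fun e he => hr.subset he
  have hpair : ∀ e f : E, e ≠ f → color e = color f → {g | color g = color e} ⊆ {e, f} :=
    fun e f hne hef => (eq_pair_of_ncard_eq_two (hcol _) rfl hef.symm hne).subset
  obtain ⟨hS₁, hR₁⟩ := connects_and_rainbow_img ho hnr hslot hpair hFD hc₁ hc₂ hin₂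
  obtain ⟨hS₂, hR₂⟩ := connects_and_rainbow_img ho hnr hslot hpair hFD.symm hc₂ hc₁ hin₁
  have hSD : Disjoint {e | UArc.img e ∈ F₁} {e | UArc.img e ∈ F₂} :=
    Set.disjoint_left.2 fun e h₁ h₂ => Set.disjoint_left.1 hFD h₁ h₂
  have hSU : {e | UArc.img e ∈ F₁} ∪ {e | UArc.img e ∈ F₂} = Set.univ :=
    Set.eq_univ_of_forall fun e => hFU.symm.subset (Set.mem_univ (UArc.img e))
  have : Nonempty V := ⟨r⟩
  obtain ⟨hT₁, hT₂⟩ := isSpanningTree_of_disjoint_connects hU h₁ h₂ hSD hS₁ hS₂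
  exact ⟨_, _, hSU, hSD, hT₁, hT₂, hR₁, hR₂⟩

/-- With `G` and `D` as above: if `A` can be partitioned into two
weakly connected spanning subgraphs such that every vertex `u ∈ U - r` has positive
in-degree in both of them, then the edge set of `G` can be partitioned into two rainbow
spanning trees. -/
theorem rainbow_of_digraph_decomposition {V E C : Type*} [DecidableEq V] [Fintype V] [Fintype E] [Fintype C]
    (ends : E → Sym2 V) (color : E → C) (r : V)
    (T₁ T₂ : Set E) (hU : T₁ ∪ T₂ = Set.univ) (hD : Disjoint T₁ T₂)
    (h₁ : IsSpanningTree ends T₁) (h₂ : IsSpanningTree ends T₂)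
    (hcol : ∀ c : C, {e : E | color e = c}.ncard = 2)
    (o : E → V × V) (ho : ∀ e : E, s((o e).1, (o e).2) = ends e)
    (hr : {e : E | (o e).2 = r} = ∅)
    (hv : ∀ v : V, v ≠ r → {e : E | (o e).2 = v}.ncard = 2)
    (slot : E → Fin 2)
    (hslot : ∀ e f : E, (o e).2 = (o f).2 → slot e = slot f → e = f)
    (hdec : ∃ F₁ F₂ : Set (UArc V E C r), F₁ ∪ F₂ = Set.univ ∧ Disjoint F₁ F₂ ∧
      Connects (uEnds color o slot) F₁ ∧ Connects (uEnds color o slot) F₂ ∧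
      (∀ u : UVtx V C r, u ≠ UVtx.root → ∃ a ∈ F₁, arcHead color o slot a = u) ∧
      (∀ u : UVtx V C r, u ≠ UVtx.root → ∃ a ∈ F₂, arcHead color o slot a = u)) :
    ∃ S₁ S₂ : Set E, S₁ ∪ S₂ = Set.univ ∧ Disjoint S₁ S₂ ∧
      IsSpanningTree ends S₁ ∧ IsSpanningTree ends S₂ ∧ Rainbow color S₁ ∧ Rainbow color S₂ :=
  rainbow_of_digraph_decomposition_general ends color r T₁ T₂ hU h₁ h₂ hcol o ho hr slot hslot hdec

end DigraphStmt8
end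

section
/- Let G=(V,E) be an edge-colored graph in which each color class contains exactly two edges, and let G'=(V',E') be the graph constructed from G. If the edge set of G is the disjoint union of two spanning trees, then the edge set of G' is the disjoint union of two spanning trees. -/
namespace ParityStmt10

/-- An edge of the multigraph connects via set `F`. -/
def Step {V E : Type*} (ends : E → Sym2 V) (F : Set E) (a b : V) : Prop :=
  ∃ e ∈ F, ends e = s(a, b)

/-- The edge set `F` connects the whole multigraph with endpoint map `ends`. -/
def Connects {V E : Type*} (ends : E → Sym2 V) (F : Set E) : Prop :=
  ∀ a b : V, Relation.ReflTransGen (Step ends F) a b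

/-- `F` is a spanning tree: it connects all vertices, minimally so. -/
def IsSpanningTree {V E : Type*} (ends : E → Sym2 V) (F : Set E) : Prop :=
  Connects ends F ∧ ∀ e ∈ F, ¬ Connects ends (F \ {e})

/-- `F` is rainbow: each color class contains at most one edge of `F`. -/
def Rainbow {E C : Type*} (color : E → C) (F : Set E) : Prop :=
  ∀ e ∈ F, ∀ f ∈ F, color e = color f → e = f

/-- The endpoint map of the graph `G' = (V', E')` obtained from the edge-colored graph
`G` (with endpoint map `ends` and coloring `color`) by adding, for each color `c`, a new
vertex `w_c = Sum.inr c`, and for each edge `e` of color `c` a new edge `Sum.inr e`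
joining `w_c` to the chosen endpoint `att e` of `e`.  Original edges of `G` are the edges
`Sum.inl e` of `G'`, and original vertices of `G` are the vertices `Sum.inl v` of `V'`. -/
def endsExt {V E C : Type*} (ends : E → Sym2 V) (color : E → C) (att : E → V) :
    E ⊕ E → Sym2 (V ⊕ C)
  | .inl e => (ends e).map Sum.inl
  | .inr e => s(Sum.inl (att e), Sum.inr (color e))

/-- `X ⊆ E'` is a parity set: it is a union of the pairs `{e, e_c}`, i.e. it contains the
edge `e` of `G` if and only if it contains the corresponding new edge `e_c`. -/
def IsParity {E : Type*} (X : Set (E ⊕ E)) : Prop :=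
  ∀ e : E, Sum.inl e ∈ X ↔ Sum.inr e ∈ X

/-! If `T` is a spanning tree of `G` and `S ⊆ E` contains exactly one edge of each color,
then `T ∪ {e_c : e ∈ S}` is a spanning tree of `G'`: each `w_c` becomes a leaf, joined by `e_c`
for the unique `e ∈ S` of color `c`. Contracting these leaf edges maps connectivity in `G'`
back to connectivity by `T`, and removing a leaf edge isolates its leaf. Since every color
class has two edges, the complement of such an `S` is again one, so `(T₁, S)` and `(T₂, Sᶜ)`
split `E'` into two spanning trees. -/

section

variable {V E C : Type*}

instance (ends : E → Sym2 V) (F : Set E) : Std.Symm (Step ends F) where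
  symm _ _ := fun ⟨e, he, hab⟩ => ⟨e, he, hab.trans Sym2.eq_swap⟩

def IsTransversal (color : E → C) (S : Set E) : Prop :=
  ∀ c, ∃! e, e ∈ S ∧ color e = c

lemma isTransversal_range {color : E → C} {s : C → E} (hs : ∀ c, color (s c) = c) :
    IsTransversal color (Set.range s) := by
  intro c
  refine ⟨s c, ⟨⟨c, rfl⟩, hs c⟩, ?_⟩
  rintro _ ⟨⟨c', rfl⟩, rfl⟩
  rw [hs]

lemma exists_isTransversal {color : E → C} (h : ∀ c, ∃ e, color e = c) :
    ∃ S, IsTransversal color S := by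
  choose s hs using h
  exact ⟨_, isTransversal_range hs⟩

lemma IsTransversal.compl {color : E → C} {S : Set E}
    (hcol : ∀ c : C, {e : E | color e = c}.ncard = 2) (hS : IsTransversal color S) :
    IsTransversal color Sᶜ := by
  intro c
  obtain ⟨a, b, hab, hclass⟩ := Set.ncard_eq_two.1 (hcol c)
  have hmem : ∀ e, color e = c ↔ e = a ∨ e = b := fun e => by
    simpa using Set.ext_iff.1 hclass e
  obtain ⟨s, ⟨hsS, hsc⟩, hsuniq⟩ := hS c
  have hnotS : ∀ e, color e = c → e ≠ s → e ∉ S := fun e hec hes heS =>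
    hes (hsuniq e ⟨heS, hec⟩)
  rcases (hmem s).1 hsc with rfl | rfl
  · refine ⟨b, ⟨hnotS b ((hmem b).2 (.inr rfl)) (Ne.symm hab), (hmem b).2 (.inr rfl)⟩, ?_⟩
    rintro e ⟨heS, hec⟩
    rcases (hmem e).1 hec with rfl | rfl
    exacts [absurd hsS heS, rfl]
  · refine ⟨a, ⟨hnotS a ((hmem a).2 (.inl rfl)) hab, (hmem a).2 (.inl rfl)⟩, ?_⟩
    rintro e ⟨heS, hec⟩
    rcases (hmem e).1 hec with rfl | rfl
    exacts [rfl, absurd hsS heS]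

def edgesExt (T S : Set E) : Set (E ⊕ E) :=
  Sum.inl '' T ∪ Sum.inr '' S

@[simp]
lemma inl_mem_edgesExt {T S : Set E} {e : E} : Sum.inl e ∈ edgesExt T S ↔ e ∈ T := by
  simp [edgesExt]

@[simp]
lemma inr_mem_edgesExt {T S : Set E} {e : E} : Sum.inr e ∈ edgesExt T S ↔ e ∈ S := by
  simp [edgesExt]

lemma edgesExt_union_edgesExt (T S T' S' : Set E) :
    edgesExt T S ∪ edgesExt T' S' = edgesExt (T ∪ T') (S ∪ S') := by
  ext (e | e) <;> simp

lemma disjoint_edgesExt {T S T' S' : Set E} (hT : Disjoint T T') (hS : Disjoint S S') :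
    Disjoint (edgesExt T S) (edgesExt T' S') := by
  rw [Set.disjoint_left] at hT hS ⊢
  rintro (e | e)
  · simpa using @hT e
  · simpa using @hS e

lemma edgesExt_diff_inl (T S : Set E) (e : E) :
    edgesExt T S \ {Sum.inl e} = edgesExt (T \ {e}) S := by
  ext (f | f) <;> simp

lemma edgesExt_diff_inr (T S : Set E) (e : E) :
    edgesExt T S \ {Sum.inr e} = edgesExt T (S \ {e}) := by
  ext (f | f) <;> simp

variable (ends : E → Sym2 V) (color : E → C) (att : E → V)

lemma inr_mem_endsExt_iff {c : C} {x : E ⊕ E} :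
    Sum.inr c ∈ endsExt ends color att x ↔ ∃ f, x = Sum.inr f ∧ color f = c := by
  rcases x with f | f <;> simp [endsExt, eq_comm]

lemma step_endsExt_inl {T S : Set E} {a b : V} (h : Step ends T a b) :
    Step (endsExt ends color att) (edgesExt T S) (Sum.inl a) (Sum.inl b) := by
  obtain ⟨e, he, hab⟩ := h
  exact ⟨Sum.inl e, by simpa using he, by simp [endsExt, hab]⟩

lemma step_endsExt_inr {T S : Set E} {e : E} (he : e ∈ S) :
    Step (endsExt ends color att) (edgesExt T S) (Sum.inl (att e)) (Sum.inr (color e)) :=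
  ⟨Sum.inr e, by simpa using he, rfl⟩

lemma connects_edgesExt {T S : Set E} (hT : Connects ends T) (hS : ∀ c, ∃ e ∈ S, color e = c) :
    Connects (endsExt ends color att) (edgesExt T S) := by
  have reach_inl : ∀ x, ∃ v, Relation.ReflTransGen
      (Step (endsExt ends color att) (edgesExt T S)) (Sum.inl v) x := by
    rintro (v | c)
    · exact ⟨v, .refl⟩
    · obtain ⟨e, he, rfl⟩ := hS c
      exact ⟨att e, .single (step_endsExt_inr ends color att he)⟩
  intro x y
  obtain ⟨v, hv⟩ := reach_inl x
  obtain ⟨w, hw⟩ := reach_inl y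
  refine (Std.Symm.symm _ _ hv).trans (.trans ?_ hw)
  exact (hT v w).lift Sum.inl fun a b => step_endsExt_inl ends color att

lemma connects_of_connects_edgesExt {T S : Set E} (hS : IsTransversal color S)
    (h : Connects (endsExt ends color att) (edgesExt T S)) : Connects ends T := by
  choose s hs hsuniq using hS
  let contract : V ⊕ C → V := Sum.elim id fun c => att (s c)
  have hstep : ∀ x y, Step (endsExt ends color att) (edgesExt T S) x y →
      Relation.ReflTransGen (Step ends T) (contract x) (contract y) := by
    rintro x y ⟨e | e, he, hxy⟩
    · obtain ⟨a, b, hab⟩ : ∃ a b, ends e = s(a, b) := Sym2.exists.1 ⟨_, rfl⟩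
      rw [endsExt, hab, Sym2.map_mk, Sym2.eq_iff] at hxy
      rcases hxy with ⟨rfl, rfl⟩ | ⟨rfl, rfl⟩
      · exact .single ⟨e, by simpa using he, hab⟩
      · exact .single ⟨e, by simpa using he, hab.trans Sym2.eq_swap⟩
    · have hse : s (color e) = e := (hsuniq (color e) e ⟨by simpa using he, rfl⟩).symm
      have hcontract : contract (Sum.inr (color e)) = contract (Sum.inl (att e)) := by
        simp [contract, hse]
      rw [endsExt, Sym2.eq_iff] at hxy
      rcases hxy with ⟨rfl, rfl⟩ | ⟨rfl, rfl⟩ <;> rw [hcontract]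
  intro a b
  exact (h (Sum.inl a) (Sum.inl b)).lift' contract hstep

lemma not_connects_edgesExt_of_forall_color_ne {T S : Set E} {c : C}
    (hc : ∀ f ∈ S, color f ≠ c) (v : V) :
    ¬ Connects (endsExt ends color att) (edgesExt T S) := by
  intro h
  rcases (h (Sum.inr c) (Sum.inl v)).cases_head with hcv | ⟨z, ⟨x, hx, hxz⟩, -⟩
  · exact Sum.inr_ne_inl hcv
  · obtain ⟨f, rfl, hfc⟩ := (inr_mem_endsExt_iff ends color att).1 (hxz ▸ Sym2.mem_mk_left _ _)
    exact hc f (by simpa using hx) hfc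

theorem isSpanningTree_edgesExt {T S : Set E} (hT : IsSpanningTree ends T)
    (hS : IsTransversal color S) :
    IsSpanningTree (endsExt ends color att) (edgesExt T S) := by
  refine ⟨connects_edgesExt ends color att hT.1 fun c => (hS c).exists, ?_⟩
  rintro (e | e) he hconn
  · rw [edgesExt_diff_inl] at hconn
    exact hT.2 e (by simpa using he) (connects_of_connects_edgesExt ends color att hS hconn)
  · rw [edgesExt_diff_inr] at hconn
    refine not_connects_edgesExt_of_forall_color_ne ends color att (c := color e) ?_ (att e) hconn
    rintro f ⟨hfS, hfe⟩ hfc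
    exact hfe ((hS _).unique ⟨hfS, hfc⟩ ⟨by simpa using he, rfl⟩)

end

theorem extension_two_spanning_trees_general {V E C : Type*}
    (ends : E → Sym2 V) (color : E → C) (att : E → V)
    (hcol : ∀ c : C, {e : E | color e = c}.ncard = 2)
    (h : ∃ T₁ T₂ : Set E, T₁ ∪ T₂ = Set.univ ∧ Disjoint T₁ T₂ ∧
      IsSpanningTree ends T₁ ∧ IsSpanningTree ends T₂) :
    ∃ T₁' T₂' : Set (E ⊕ E), T₁' ∪ T₂' = Set.univ ∧ Disjoint T₁' T₂' ∧
      IsSpanningTree (endsExt ends color att) T₁' ∧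
      IsSpanningTree (endsExt ends color att) T₂' := by
  obtain ⟨T₁, T₂, hunion, hdisj, hT₁, hT₂⟩ := h
  obtain ⟨S, hS⟩ := exists_isTransversal fun c =>
    Set.nonempty_of_ncard_ne_zero (s := {e | color e = c}) (by simp [hcol c])
  refine ⟨edgesExt T₁ S, edgesExt T₂ Sᶜ, ?_, disjoint_edgesExt hdisj disjoint_compl_right,
    isSpanningTree_edgesExt ends color att hT₁ hS,
    isSpanningTree_edgesExt ends color att hT₂ (hS.compl hcol)⟩
  rw [edgesExt_union_edgesExt, hunion, Set.union_compl_self]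
  ext (e | e) <;> simp

/-- Let `G = (V, E)` be a finite edge-colored graph in which each color
class contains exactly two edges, and let `G' = (V', E')` be the graph constructed from
`G` (where `att e` is the chosen endpoint of `e` to which the new edge `e_c` is
attached).  If the edge set of `G` is the disjoint union of two spanning trees, then the
edge set of `G'` is the disjoint union of two spanning trees. -/
theorem extension_two_spanning_trees {V E C : Type*} [Fintype V] [Fintype E] [Fintype C]
    (ends : E → Sym2 V) (color : E → C) (att : E → V)
    (hcol : ∀ c : C, {e : E | color e = c}.ncard = 2)
    (hatt : ∀ e : E, att e ∈ ends e)
    (h : ∃ T₁ T₂ : Set E, T₁ ∪ T₂ = Set.univ ∧ Disjoint T₁ T₂ ∧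
      IsSpanningTree ends T₁ ∧ IsSpanningTree ends T₂) :
    ∃ T₁' T₂' : Set (E ⊕ E), T₁' ∪ T₂' = Set.univ ∧ Disjoint T₁' T₂' ∧
      IsSpanningTree (endsExt ends color att) T₁' ∧
      IsSpanningTree (endsExt ends color att) T₂' :=
  extension_two_spanning_trees_general ends color att hcol h

end ParityStmt10
end

section
/- Let G=(V,E) be an edge-colored graph. Then G contains a rainbow spanning tree if and only if for every partition 𝒫 of V into nonempty classes, the set of edges joining different classes of 𝒫 meets at least |𝒫|−1 distinct color classes. -/
/-!
Necessity: deleting from a rainbow spanning tree its edges between different classes of `𝒫`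
leaves at least `|𝒫|` components, each deleted edge adds at most one component, and the deleted
edges have distinct crossing colors.

Sufficiency is Rado's theorem for the cycle matroid and the partition matroid of the color
classes. Call an edge set `F` good (`RadoCondition`) if deleting from it the edges of any `k`
colors leaves at most `k + 1` components; applied to the partition into the components that
remain, the hypothesis says that `E` is good. If two edges `e ≠ f` of a good `F` have the same
color `c`, then `F \ {e}` or `F \ {f}` is good: color sets `K₁`, `K₂` violating the condition
for them would, by supermodularity of the number of components, make `K₁ ∩ K₂` or
`insert c (K₁ ∪ K₂)` violate it for `F`. So a minimal good set is rainbow, and connected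
(take `k = 0`); any minimal connected subset of it is a rainbow spanning tree.
-/

namespace RainbowTreeCriterion

/-- An edge of the multigraph connects via set `F`. -/
def Step {V E : Type*} (ends : E → Sym2 V) (F : Set E) (a b : V) : Prop :=
  ∃ e ∈ F, ends e = s(a, b)

/-- The edge set `F` connects the whole multigraph with endpoint map `ends`. -/
def Connects {V E : Type*} (ends : E → Sym2 V) (F : Set E) : Prop :=
  ∀ a b : V, Relation.ReflTransGen (Step ends F) a b

/-- `F` is a spanning tree: it connects all vertices, minimally so. -/
def IsSpanningTree {V E : Type*} (ends : E → Sym2 V) (F : Set E) : Prop :=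
  Connects ends F ∧ ∀ e ∈ F, ¬ Connects ends (F \ {e})

/-- `F` is rainbow: each color class contains at most one edge of `F`. -/
def Rainbow {E C : Type*} (color : E → C) (F : Set E) : Prop :=
  ∀ e ∈ F, ∀ f ∈ F, color e = color f → e = f

end RainbowTreeCriterion

theorem Nat.card_eq_card_add_one_of_surjective {α β : Type*} [Finite α] {f : α → β}
    (hf : Function.Surjective f) {p q : α} (hpq : p ≠ q) (hfpq : f p = f q)
    (hfib : ∀ a b, f a = f b → a = b ∨ (a ∈ ({p, q} : Set α) ∧ b ∈ ({p, q} : Set α))) :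
    Nat.card α = Nat.card β + 1 := by
  classical
  have hbij : Function.Bijective fun a : {a // a ≠ q} => f a := by
    refine ⟨fun a b hab => Subtype.ext ?_, fun b => ?_⟩
    · rcases hfib a b hab with h | ⟨ha, hb⟩
      · exact h
      · simp only [Set.mem_insert_iff, Set.mem_singleton_iff] at ha hb
        grind [a.2, b.2]
    · obtain ⟨a, rfl⟩ := hf b
      by_cases ha : a = q
      · exact ⟨⟨p, hpq⟩, ha ▸ hfpq⟩
      · exact ⟨⟨a, ha⟩, rfl⟩
  rw [← Nat.card_congr (Equiv.optionSubtypeNe q), Finite.card_option,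
    Nat.card_eq_of_bijective _ hbij]

theorem Sym2.exists_eq_mk {α : Type*} (z : Sym2 α) : ∃ x y, z = s(x, y) :=
  Sym2.ind (f := fun z => ∃ x y, z = s(x, y)) (fun x y => ⟨x, y, rfl⟩) z

namespace RainbowTreeCriterion

open Relation

section Components

variable {V E : Type*} {ends : E → Sym2 V}

instance (F : Set E) : Std.Symm (Step ends F) where
  symm _ _ := fun ⟨e, he, h⟩ => ⟨e, he, h.trans Sym2.eq_swap⟩

theorem Step.mono {F F' : Set E} (h : F ⊆ F') {a b : V} : Step ends F a b → Step ends F' a b :=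
  fun ⟨e, he, hab⟩ => ⟨e, h he, hab⟩

theorem quot_mk_step_eq_iff {F : Set E} {a b : V} :
    Quot.mk (Step ends F) a = Quot.mk _ b ↔ ReflTransGen (Step ends F) a b := by
  rw [← EqvGen.eqvGen_eq_reflTransGen]
  exact ⟨Quot.eqvGen_exact, Quot.eqvGen_sound⟩

variable (ends) in
noncomputable def numComponents (F : Set E) : ℕ := Nat.card (Quot (Step ends F))

theorem connects_iff_numComponents_le_one [Finite V] {F : Set E} :
    Connects ends F ↔ numComponents ends F ≤ 1 := by
  rw [numComponents, Finite.card_le_one_iff_subsingleton]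
  refine ⟨fun h => ⟨fun p q => ?_⟩, fun h a b => quot_mk_step_eq_iff.1 (Subsingleton.elim _ _)⟩
  induction p using Quot.ind
  induction q using Quot.ind
  exact quot_mk_step_eq_iff.2 (h _ _)

def componentMap {F F' : Set E} (h : F ⊆ F') : Quot (Step ends F) → Quot (Step ends F') :=
  Quot.map id fun _ _ => Step.mono h

theorem componentMap_surjective {F F' : Set E} (h : F ⊆ F') :
    Function.Surjective (componentMap (ends := ends) h) := by
  rintro ⟨a⟩
  exact ⟨Quot.mk _ a, rfl⟩

theorem numComponents_antitone [Finite V] : Antitone (numComponents ends) := fun _ _ h =>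
  Nat.card_le_card_of_surjective _ (componentMap_surjective h)

theorem componentMap_insert_eq {F : Set E} {e : E} {x y : V} (hxy : ends e = s(x, y))
    {p q : Quot (Step ends F)}
    (h : componentMap (Set.subset_insert e F) p = componentMap (Set.subset_insert e F) q) :
    p = q ∨
      (p ∈ ({Quot.mk _ x, Quot.mk _ y} : Set _) ∧ q ∈ ({Quot.mk _ x, Quot.mk _ y} : Set _)) := by
  induction p using Quot.ind with | mk a => ?_
  induction q using Quot.ind with | mk b => ?_
  have hab : EqvGen (Step ends (insert e F)) a b := Quot.eqvGen_exact h
  clear h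
  induction hab with
  | rel a b hab =>
    obtain ⟨g, hg | hg, hgab⟩ := hab
    · rw [hg, hxy, Sym2.eq_iff] at hgab
      rcases hgab with ⟨rfl, rfl⟩ | ⟨rfl, rfl⟩ <;> simp
    · exact .inl (Quot.sound ⟨g, hg, hgab⟩)
  | refl => exact .inl rfl
  | symm _ _ _ ih => exact ih.imp Eq.symm And.symm
  | trans _ _ _ _ _ ih₁ ih₂ => grind

theorem numComponents_insert_of_reflTransGen [Finite V] {F : Set E} {e : E} {x y : V}
    (hxy : ends e = s(x, y)) (hconn : ReflTransGen (Step ends F) x y) :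
    numComponents ends (insert e F) = numComponents ends F := by
  rw [← quot_mk_step_eq_iff] at hconn
  refine (Nat.card_eq_of_bijective (componentMap (Set.subset_insert e F))
    ⟨fun p q hpq => ?_, componentMap_surjective _⟩).symm
  rcases componentMap_insert_eq hxy hpq with h | ⟨hp, hq⟩
  · exact h
  · simp only [hconn, Set.mem_insert_iff, Set.mem_singleton_iff, or_self] at hp hq
    rw [hp, hq]

theorem numComponents_insert_of_not_reflTransGen [Finite V] {F : Set E} {e : E} {x y : V}
    (hxy : ends e = s(x, y)) (hconn : ¬ReflTransGen (Step ends F) x y) :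
    numComponents ends F = numComponents ends (insert e F) + 1 := by
  rw [← quot_mk_step_eq_iff] at hconn
  exact Nat.card_eq_card_add_one_of_surjective (componentMap_surjective _) hconn
    (Quot.sound ⟨e, Set.mem_insert e F, hxy⟩) fun _ _ => componentMap_insert_eq hxy

theorem numComponents_le_insert_add_one [Finite V] (F : Set E) (e : E) :
    numComponents ends F ≤ numComponents ends (insert e F) + 1 := by
  obtain ⟨x, y, hxy⟩ := Sym2.exists_eq_mk (ends e)
  by_cases hconn : ReflTransGen (Step ends F) x y
  · rw [numComponents_insert_of_reflTransGen hxy hconn]; omega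
  · rw [numComponents_insert_of_not_reflTransGen hxy hconn]

theorem numComponents_le_union_add_ncard [Finite V] (F : Set E) {D : Set E} (hD : D.Finite) :
    numComponents ends F ≤ numComponents ends (F ∪ D) + D.ncard := by
  induction D, hD using Set.Finite.induction_on with
  | empty => simp
  | @insert e D he hD ih =>
    rw [Set.union_insert, Set.ncard_insert_of_notMem he hD]
    have := numComponents_le_insert_add_one (ends := ends) (F ∪ D) e
    omega

theorem numComponents_add_le [Finite V] {A B : Set E} (hBA : B ⊆ A) {D : Set E} (hD : D.Finite) :
    numComponents ends A + numComponents ends (B ∪ D) ≤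
      numComponents ends (A ∪ D) + numComponents ends B := by
  induction D, hD using Set.Finite.induction_on with
  | empty => simp
  | @insert e D _ _ ih =>
    obtain ⟨x, y, hxy⟩ := Sym2.exists_eq_mk (ends e)
    rw [Set.union_insert, Set.union_insert]
    by_cases hA : ReflTransGen (Step ends (A ∪ D)) x y
    · rw [numComponents_insert_of_reflTransGen hxy hA]
      have := numComponents_antitone (ends := ends) (Set.subset_insert e (B ∪ D))
      omega
    · have hB : ¬ReflTransGen (Step ends (B ∪ D)) x y := fun h =>
        hA (ReflTransGen.mono (fun _ _ => Step.mono (Set.union_subset_union_left D hBA)) _ _ h)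
      rw [numComponents_insert_of_not_reflTransGen hxy hB] at ih
      have := numComponents_le_insert_add_one (ends := ends) (A ∪ D) e
      omega

theorem numComponents_add_le_union_add_inter [Finite V] (A : Set E) {B : Set E} (hB : B.Finite) :
    numComponents ends A + numComponents ends B ≤
      numComponents ends (A ∪ B) + numComponents ends (A ∩ B) := by
  have h := numComponents_add_le (ends := ends) (Set.inter_subset_left (s := A) (t := B)) hB
  rwa [Set.union_eq_self_of_subset_left Set.inter_subset_right] at h

theorem exists_isSpanningTree_subset [Finite E] {F : Set E} (hF : Connects ends F) :
    ∃ T ⊆ F, IsSpanningTree ends T := by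
  obtain ⟨T, hTF, hT⟩ := exists_minimal_le_of_wellFoundedLT (Connects ends) F hF
  refine ⟨T, hTF, hT.prop, fun e he hconn => ?_⟩
  exact (Set.sdiff_singleton_ssubset.2 he).not_ge (hT.le_of_le hconn Set.sdiff_subset)

end Components

theorem Rainbow.mono {E C : Type*} {color : E → C} {F T : Set E} (hF : Rainbow color F)
    (hTF : T ⊆ F) : Rainbow color T :=
  fun e he f hf => hF e (hTF he) f (hTF hf)

section Partitions

variable {V E C : Type*} [Fintype V] [DecidableEq V] {ends : E → Sym2 V}

def partOfComponent (P : Finpartition (Finset.univ : Finset V)) {F : Set E}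
    (hP : ∀ a b, Step ends F a b → P.part a = P.part b) : Quot (Step ends F) → P.parts :=
  Quot.lift (fun v => ⟨P.part v, P.part_mem.2 (Finset.mem_univ v)⟩) fun a b h =>
    Subtype.ext (hP a b h)

theorem card_parts_le_numComponents (P : Finpartition (Finset.univ : Finset V)) {F : Set E}
    (hP : ∀ a b, Step ends F a b → P.part a = P.part b) :
    P.parts.card ≤ numComponents ends F := by
  have hsurj : Function.Surjective (partOfComponent P hP) := by
    rintro ⟨t, ht⟩
    obtain ⟨v, -, rfl⟩ := P.part_surjOn ht
    exact ⟨Quot.mk _ v, rfl⟩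
  simpa [numComponents] using Nat.card_le_card_of_surjective _ hsurj

variable (ends) in
open Classical in
noncomputable def componentPartition (F : Set E) : Finpartition (Finset.univ : Finset V) :=
  Finpartition.ofSetoid (EqvGen.setoid (Step ends F))

theorem part_componentPartition_eq_iff {F : Set E} {a b : V} :
    (componentPartition ends F).part a = (componentPartition ends F).part b ↔
      ReflTransGen (Step ends F) a b := by
  rw [← Finpartition.mem_part_iff_part_eq_part _ (Finset.mem_univ _) (Finset.mem_univ _),
    ← quot_mk_step_eq_iff, eq_comm]
  classical
  exact Finpartition.mem_part_ofSetoid_iff_rel.trans ⟨Quot.eqvGen_sound, Quot.eqvGen_exact⟩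

theorem card_parts_componentPartition (F : Set E) :
    (componentPartition ends F).parts.card = numComponents ends F := by
  have hP a b (h : Step ends F a b) := part_componentPartition_eq_iff.2 (ReflTransGen.single h)
  refine (card_parts_le_numComponents _ hP).antisymm ?_
  have hinj : Function.Injective (partOfComponent _ hP) := by
    rintro ⟨a⟩ ⟨b⟩ h
    exact quot_mk_step_eq_iff.2 (part_componentPartition_eq_iff.1 (congrArg Subtype.val h))
  simpa [numComponents] using Nat.card_le_card_of_injective _ hinj

end Partitions

section Rado

variable {V E C : Type*} {ends : E → Sym2 V} {color : E → C}

variable (ends color) in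
def RadoCondition (F : Set E) : Prop :=
  ∀ K : Finset C, numComponents ends (F \ color ⁻¹' K) ≤ K.card + 1

variable [Finite V] [Finite E]

theorem RadoCondition.diff_singleton_or {F : Set E} (hF : RadoCondition ends color F) {e f : E}
    (hef : e ≠ f) (hc : color e = color f) :
    RadoCondition ends color (F \ {e}) ∨ RadoCondition ends color (F \ {f}) := by
  classical
  by_contra! h
  simp only [RadoCondition, not_forall, not_le] at h
  obtain ⟨⟨K₁, h₁⟩, K₂, h₂⟩ := h
  have hK₁ : color e ∉ K₁ := by
    intro hmem
    have hsame : (F \ {e}) \ color ⁻¹' K₁ = F \ color ⁻¹' K₁ := by ext; grind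
    exact (hF K₁).not_gt (hsame ▸ h₁)
  have hK₂ : color f ∉ K₂ := by
    intro hmem
    have hsame : (F \ {f}) \ color ⁻¹' K₂ = F \ color ⁻¹' K₂ := by ext; grind
    exact (hF K₂).not_gt (hsame ▸ h₂)
  have hunion : ((F \ {e}) \ color ⁻¹' K₁) ∪ ((F \ {f}) \ color ⁻¹' K₂) =
      F \ color ⁻¹' ↑(K₁ ∩ K₂) := by
    ext g; simp only [Set.mem_union, Set.mem_sdiff, Set.mem_singleton_iff, Set.mem_preimage,
      Finset.coe_inter, Set.mem_inter_iff, Finset.mem_coe]; grind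
  have hinter : F \ color ⁻¹' ↑(insert (color e) (K₁ ∪ K₂)) ⊆
      ((F \ {e}) \ color ⁻¹' K₁) ∩ ((F \ {f}) \ color ⁻¹' K₂) := by
    intro g; simp only [Set.mem_union, Set.mem_sdiff, Set.mem_singleton_iff, Set.mem_preimage,
      Finset.coe_insert, Finset.coe_union, Set.mem_inter_iff, Finset.mem_coe, Set.mem_insert_iff]
    grind
  have hsuper := numComponents_add_le_union_add_inter (ends := ends)
    ((F \ {e}) \ color ⁻¹' K₁) (Set.toFinite ((F \ {f}) \ color ⁻¹' K₂))
  rw [hunion] at hsuper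
  have hmono := numComponents_antitone (ends := ends) hinter
  have hI := hF (K₁ ∩ K₂)
  have hU := hF (insert (color e) (K₁ ∪ K₂))
  rw [Finset.card_insert_of_notMem (by grind)] at hU
  have := Finset.card_union_add_card_inter K₁ K₂
  omega

theorem RadoCondition.exists_connects_rainbow {F : Set E} (hF : RadoCondition ends color F) :
    ∃ T ⊆ F, Connects ends T ∧ Rainbow color T := by
  obtain ⟨T, hTF, hT⟩ := exists_minimal_le_of_wellFoundedLT (RadoCondition ends color) F hF
  refine ⟨T, hTF, connects_iff_numComponents_le_one.2 (by simpa using hT.prop ∅), ?_⟩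
  intro e he f hf hc
  by_contra hef
  rcases hT.prop.diff_singleton_or hef hc with h | h
  · exact hT.not_prop_of_lt (Set.sdiff_singleton_ssubset.2 he) h
  · exact hT.not_prop_of_lt (Set.sdiff_singleton_ssubset.2 hf) h

end Rado

section Crossing

variable {V E C : Type*} [Fintype V] [DecidableEq V] {ends : E → Sym2 V} {color : E → C}

variable (ends color) in
def crossingColors (P : Finpartition (Finset.univ : Finset V)) : Set C :=
  {c | ∃ e, color e = c ∧ ∃ x y, ends e = s(x, y) ∧ P.part x ≠ P.part y}

theorem crossingColors_finite [Finite E] (P : Finpartition (Finset.univ : Finset V)) :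
    (crossingColors ends color P).Finite :=
  (Set.finite_range color).subset fun _ ⟨e, he, _⟩ => ⟨e, he⟩

theorem card_parts_sub_one_le_ncard_crossingColors [Finite E] {T : Set E} (hT : Connects ends T)
    (hrb : Rainbow color T) (P : Finpartition (Finset.univ : Finset V)) :
    P.parts.card - 1 ≤ (crossingColors ends color P).ncard := by
  set D := {e ∈ T | ∃ x y, ends e = s(x, y) ∧ P.part x ≠ P.part y}
  have hDT : D ⊆ T := Set.sep_subset _ _
  have hrest : ∀ a b, Step ends (T \ D) a b → P.part a = P.part b := by
    rintro a b ⟨e, ⟨heT, heD⟩, hab⟩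
    by_contra hne
    exact heD ⟨heT, a, b, hab, hne⟩
  have hparts := card_parts_le_numComponents P hrest
  have hsplit := numComponents_le_union_add_ncard (ends := ends) (T \ D) (Set.toFinite D)
  rw [Set.sdiff_union_of_subset hDT] at hsplit
  have hconn := connects_iff_numComponents_le_one.1 hT
  have hcolors : D.ncard ≤ (crossingColors ends color P).ncard := by
    rw [← Set.InjOn.ncard_image (hrb.mono hDT)]
    refine Set.ncard_le_ncard ?_ (crossingColors_finite P)
    rintro _ ⟨e, ⟨-, hcross⟩, rfl⟩
    exact ⟨e, rfl, hcross⟩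
  omega

theorem radoCondition_univ
    (h : ∀ P : Finpartition (Finset.univ : Finset V),
      P.parts.card - 1 ≤ (crossingColors ends color P).ncard) :
    RadoCondition ends color Set.univ := by
  intro K
  set P := componentPartition ends (Set.univ \ color ⁻¹' K)
  have hsub : crossingColors ends color P ⊆ K := by
    rintro _ ⟨e, rfl, x, y, hxy, hne⟩
    by_contra hK
    exact hne (part_componentPartition_eq_iff.2 (ReflTransGen.single ⟨e, ⟨trivial, hK⟩, hxy⟩))
  have hcolors := Set.ncard_le_ncard hsub (Finset.finite_toSet K)
  have hparts := h P
  rw [Set.ncard_coe_finset] at hcolors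
  rw [card_parts_componentPartition] at hparts
  omega

end Crossing

/-- A finite edge-colored graph `G = (V, E)` (endpoint map `ends`,
coloring `color`) contains a rainbow spanning tree if and only if for every partition
`P` of `V` into nonempty classes, the set of edges joining different classes of `P`
meets at least `|P| - 1` distinct color classes. -/
theorem rainbow_spanning_tree_iff {V E C : Type*} [Fintype V] [DecidableEq V] [Fintype E]
    (ends : E → Sym2 V) (color : E → C) :
    (∃ T : Set E, IsSpanningTree ends T ∧ Rainbow color T) ↔
      ∀ P : Finpartition (Finset.univ : Finset V),
        P.parts.card - 1 ≤
          {c : C | ∃ e : E, color e = c ∧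
            ∃ x y : V, ends e = s(x, y) ∧ P.part x ≠ P.part y}.ncard := by
  constructor
  · rintro ⟨T, hT, hrb⟩ P
    exact card_parts_sub_one_le_ncard_crossingColors hT.1 hrb P
  · intro h
    obtain ⟨F, -, hF, hrb⟩ := (radoCondition_univ h).exists_connects_rainbow
    obtain ⟨T, hTF, hT⟩ := exists_isSpanningTree_subset hF
    exact ⟨T, hT, hrb.mono hTF⟩

end RainbowTreeCriterion
end

section
/- Let k be a positive integer and let D=(V,A) be a digraph with a vertex r∈V such that the underlying undirected graph of D is k-partition-connected, r has in-degree 0, and every vertex v∈V−r has in-degree exactly k. Then A can be partitioned into k pairwise arc-disjoint spanning arborescences rooted at r; in particular, A can be partitioned into k weakly connected spanning subgraphs in each of which every vertex v∈V−r has positive in-degree. -/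
namespace ArborescenceStmt

/-- An arc of the digraph connects via set `F` (in the underlying undirected graph). -/
def Step {V A : Type*} (tail head : A → V) (F : Set A) (x y : V) : Prop :=
  ∃ a ∈ F, s(tail a, head a) = s(x, y)

/-- The arc set `F` is a weakly connected spanning subgraph: its underlying undirected
graph connects all vertices. -/
def WeaklyConnects {V A : Type*} (tail head : A → V) (F : Set A) : Prop :=
  ∀ x y : V, Relation.ReflTransGen (Step tail head F) x y

/-- `B` is a spanning arborescence rooted at `r`: every vertex other than `r` has
exactly one arc of `B` entering it, no arc of `B` enters `r`, and every vertex is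
reachable from `r` along arcs of `B`. -/
def IsArborescence {V A : Type*} (tail head : A → V) (r : V) (B : Set A) : Prop :=
  (∀ v : V, v ≠ r → ∃! a : A, a ∈ B ∧ head a = v) ∧
  (∀ a ∈ B, head a ≠ r) ∧
  (∀ v : V, Relation.ReflTransGen (fun x y => ∃ a ∈ B, tail a = x ∧ head a = y) r v)

/-! Taking `X` as one class and the vertices outside `X` as singletons, partition-connectivity
and the in-degrees give at least `k` arcs entering every nonempty `X ⊆ V - r`. By Edmonds'
branching theorem there are then `k` arc-disjoint spanning arborescences rooted at `r`, and as
each of them takes one of the `k` arcs entering every `v ≠ r`, they partition `A`.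

Edmonds' theorem is proved by Lovász's argument: grow an arborescence arc by arc, keeping at
least `k - 1` unused arcs entering every `X ⊆ V - r`. A minimal tight set (one entered by only
`k - 1` unused arcs) meeting the unreached vertices supplies, by submodularity of the in-degree,
an arc that enters no tight set. -/

open Finset Function Relation

theorem pairwise_disjoint_cons {α : Type*} [PartialOrder α] [OrderBot α] {n : ℕ} {s : α}
    {f : Fin n → α} (hs : ∀ i, Disjoint s (f i)) (hf : Pairwise (Disjoint on f)) :
    Pairwise (Disjoint on (Fin.cons s f : Fin (n + 1) → α)) := by
  intro i j hij
  induction i using Fin.cases <;> induction j using Fin.cases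
  · exact absurd rfl hij
  · exact hs _
  · exact (hs _).symm
  · exact hf fun h => hij (congrArg Fin.succ h)

section InDegree

variable {V A : Type*} [DecidableEq V] {tail head : A → V}

variable (tail head) in
def inDeg (F : Finset A) (X : Finset V) : ℕ :=
  #{a ∈ F | head a ∈ X ∧ tail a ∉ X}

variable (tail head) in
def IsRootedConnected (r : V) (k : ℕ) (F : Finset A) : Prop :=
  ∀ X : Finset V, X.Nonempty → r ∉ X → k ≤ inDeg tail head F X

theorem inDeg_union_add_inDeg_inter_le (F : Finset A) (X Y : Finset V) :
    inDeg tail head F (X ∪ Y) + inDeg tail head F (X ∩ Y) ≤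
      inDeg tail head F X + inDeg tail head F Y := by
  simp only [inDeg, card_filter, ← sum_add_distrib]
  refine sum_le_sum fun a _ => ?_
  by_cases head a ∈ X <;> by_cases head a ∈ Y <;> by_cases tail a ∈ X <;>
    by_cases tail a ∈ Y <;> simp [*]

theorem exists_enters_of_inDeg_lt {F : Finset A} {X Y : Finset V}
    (h : inDeg tail head F X < inDeg tail head F Y) :
    ∃ a ∈ F, head a ∈ Y ∧ tail a ∉ Y ∧ ¬(head a ∈ X ∧ tail a ∉ X) := by
  by_contra! hF
  refine h.not_ge (card_le_card fun a ha => ?_)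
  simp only [mem_filter] at ha ⊢
  exact ⟨ha.1, hF a ha.1 ha.2.1 ha.2.2⟩

theorem inDeg_sdiff_of_disjoint {F B : Finset A} {S X : Finset V} [DecidableEq A]
    (hB : ∀ a ∈ B, head a ∈ S) (hX : Disjoint X S) :
    inDeg tail head (F \ B) X = inDeg tail head F X := by
  unfold inDeg
  congr 1
  ext a
  simp only [mem_filter, mem_sdiff]
  exact ⟨fun h => ⟨h.1.1, h.2⟩,
    fun h => ⟨⟨h.1, fun ha => disjoint_left.1 hX h.2.1 (hB a ha)⟩, h.2⟩⟩

theorem inDeg_erase_of_not_enters [DecidableEq A] {F : Finset A} {a : A} {X : Finset V}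
    (ha : ¬(head a ∈ X ∧ tail a ∉ X)) :
    inDeg tail head (F.erase a) X = inDeg tail head F X := by
  rw [inDeg, filter_erase, erase_eq_of_notMem, inDeg]
  exact fun h => ha (mem_filter.1 h).2

theorem inDeg_le_inDeg_erase_add_one [DecidableEq A] (F : Finset A) (a : A) (X : Finset V) :
    inDeg tail head F X ≤ inDeg tail head (F.erase a) X + 1 := by
  rw [inDeg, inDeg, filter_erase]
  have := pred_card_le_card_erase (s := {b ∈ F | head b ∈ X ∧ tail b ∉ X}) (a := a)
  omega

theorem exists_arc_forall_enters_lt_inDeg {k : ℕ} {r : V} {G : Finset A} {T : Finset V}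
    (hT : T.Nonempty) (hG : IsRootedConnected tail head r k G)
    (hGT : ∀ X ⊆ T, X.Nonempty → k < inDeg tail head G X) :
    ∃ a ∈ G, head a ∈ T ∧ tail a ∉ T ∧
      ∀ Z : Finset V, r ∉ Z → head a ∈ Z → tail a ∉ Z → k < inDeg tail head G Z := by
  set tight : Finset V → Prop := fun Z =>
    r ∉ Z ∧ (Z ∩ T).Nonempty ∧ inDeg tail head G Z ≤ k
  suffices
      ∃ a ∈ G, head a ∈ T ∧ tail a ∉ T ∧ ∀ Z, tight Z → head a ∈ Z → tail a ∈ Z by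
    obtain ⟨a, haG, hhT, htT, hZ⟩ := this
    refine ⟨a, haG, hhT, htT, fun Z hrZ hhZ htZ => ?_⟩
    by_contra! hle
    exact htZ (hZ Z ⟨hrZ, ⟨head a, mem_inter.2 ⟨hhZ, hhT⟩⟩, hle⟩ hhZ)
  by_cases htight : ∃ Z, tight Z
  · obtain ⟨X, ⟨hrX, hXT, hXk⟩, hXmin⟩ := WellFounded.has_min wellFounded_lt _ htight
    obtain ⟨a, haG, hhXT, htXT, hXa⟩ :=
      exists_enters_of_inDeg_lt (hXk.trans_lt (hGT _ inter_subset_right hXT))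
    obtain ⟨hhX, hhT⟩ := mem_inter.1 hhXT
    have htX : tail a ∈ X := by
      by_contra h
      exact hXa ⟨hhX, h⟩
    refine ⟨a, haG, hhT, fun h => htXT (mem_inter.2 ⟨htX, h⟩),
      fun Z ⟨hrZ, _, hZk⟩ hhZ => ?_⟩
    by_contra htZ
    -- otherwise `X ∩ Z` would be a smaller tight set
    have hsub := inDeg_union_add_inDeg_inter_le (tail := tail) (head := head) G X Z
    have hXZ := hG (X ∪ Z) ⟨head a, mem_union_left _ hhX⟩ (by simp [hrX, hrZ])
    refine hXmin (X ∩ Z)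
      ⟨fun h => hrX (mem_inter.1 h).1, ⟨head a, by simp [hhX, hhZ, hhT]⟩, by omega⟩ ?_
    exact inter_subset_left.ssubset_of_not_subset fun h => htZ (mem_inter.1 (h htX)).2
  · have h0 : inDeg tail head G ∅ = 0 := by simp [inDeg]
    obtain ⟨a, haG, hhT, htT, -⟩ :=
      exists_enters_of_inDeg_lt (X := ∅) (h0 ▸ (Nat.zero_le k).trans_lt (hGT T subset_rfl hT))
    exact ⟨a, haG, hhT, htT, fun Z hZ => absurd ⟨Z, hZ⟩ htight⟩

end InDegree

section Arborescence

variable {V A : Type*} {tail head : A → V} {r : V}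

theorem IsArborescence.weaklyConnects {B : Set A} (hB : IsArborescence tail head r B) :
    WeaklyConnects tail head B := by
  have : Std.Symm (Step tail head B) :=
    ⟨fun _ _ ⟨a, ha, h⟩ => ⟨a, ha, h.trans Sym2.eq_swap⟩⟩
  have hr : ∀ x, ReflTransGen (Step tail head B) r x := fun x =>
    ReflTransGen.mono (fun _ _ ⟨a, ha, hx, hy⟩ => ⟨a, ha, by rw [hx, hy]⟩) _ _ (hB.2.2 x)
  exact fun x y => (symm (hr x)).trans (hr y)

theorem IsArborescence.card_filter_head_eq_one [DecidableEq V] {B : Finset A}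
    (hB : IsArborescence tail head r ↑B) {v : V} (hv : v ≠ r) :
    #{a ∈ B | head a = v} = 1 := by
  rw [card_eq_one_iff_existsUnique]
  simpa only [mem_filter, mem_coe] using hB.1 v hv

variable (tail head r) in
structure IsPartialArborescence (B : Finset A) (S : Finset V) : Prop where
  root_mem : r ∈ S
  head_mem : ∀ a ∈ B, head a ∈ S
  head_ne_root : ∀ a ∈ B, head a ≠ r
  existsUnique_head_eq : ∀ v ∈ S, v ≠ r → ∃! a, a ∈ B ∧ head a = v
  reachable : ∀ v ∈ S, ReflTransGen (fun x y => ∃ a ∈ B, tail a = x ∧ head a = y) r v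

namespace IsPartialArborescence

theorem empty : IsPartialArborescence tail head r ∅ {r} where
  root_mem := mem_singleton_self r
  head_mem := by simp
  head_ne_root := by simp
  existsUnique_head_eq v hv hvr := absurd (mem_singleton.1 hv) hvr
  reachable v hv := by rw [mem_singleton.1 hv]

theorem insert_arc [DecidableEq V] [DecidableEq A] {B : Finset A} {S : Finset V}
    (h : IsPartialArborescence tail head r B S) {a : A} (ht : tail a ∈ S) (hh : head a ∉ S) :
    IsPartialArborescence tail head r (insert a B) (insert (head a) S) where
  root_mem := mem_insert_of_mem h.root_mem
  head_mem b hb := by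
    rcases mem_insert.1 hb with rfl | hb
    exacts [mem_insert_self _ _, mem_insert_of_mem (h.head_mem b hb)]
  head_ne_root b hb := by
    rcases mem_insert.1 hb with rfl | hb
    exacts [fun hr => hh (hr ▸ h.root_mem), h.head_ne_root b hb]
  existsUnique_head_eq v hv hvr := by
    rcases mem_insert.1 hv with rfl | hv
    · refine ⟨a, ⟨mem_insert_self _ _, rfl⟩, fun b ⟨hb, hbv⟩ => ?_⟩
      exact (mem_insert.1 hb).resolve_right fun hb => hh (hbv ▸ h.head_mem b hb)
    · obtain ⟨b, ⟨hb, hbv⟩, hbu⟩ := h.existsUnique_head_eq v hv hvr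
      refine ⟨b, ⟨mem_insert_of_mem hb, hbv⟩, fun c ⟨hc, hcv⟩ => ?_⟩
      rcases mem_insert.1 hc with hca | hc
      exacts [absurd (by rwa [← hca, hcv]) hh, hbu c ⟨hc, hcv⟩]
  reachable v hv := by
    have hmono := ReflTransGen.mono (r := fun x y => ∃ b ∈ B, tail b = x ∧ head b = y)
      (p := fun x y => ∃ b ∈ insert a B, tail b = x ∧ head b = y)
      fun x y ⟨b, hb, hbxy⟩ => ⟨b, mem_insert_of_mem hb, hbxy⟩
    rcases mem_insert.1 hv with rfl | hv
    · exact (hmono _ _ (h.reachable _ ht)).tail ⟨a, mem_insert_self _ _, rfl, rfl⟩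
    · exact hmono _ _ (h.reachable v hv)

theorem isArborescence [Fintype V] {B : Finset A}
    (h : IsPartialArborescence tail head r B univ) : IsArborescence tail head r ↑B :=
  ⟨fun v hv => h.existsUnique_head_eq v (mem_univ v) hv, h.head_ne_root,
    fun v => h.reachable v (mem_univ v)⟩

end IsPartialArborescence

end Arborescence

section Edmonds

variable {V A : Type*} [Fintype V] [DecidableEq V] [DecidableEq A] {tail head : A → V} {r : V}

theorem exists_isArborescence_of_isPartialArborescence {k : ℕ} {F : Finset A}
    (hF : IsRootedConnected tail head r (k + 1) F) {B : Finset A} {S : Finset V} (hBF : B ⊆ F)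
    (hB : IsPartialArborescence tail head r B S)
    (hFB : IsRootedConnected tail head r k (F \ B)) :
    ∃ B' ⊆ F, IsArborescence tail head r ↑B' ∧
      IsRootedConnected tail head r k (F \ B') := by
  by_cases hS : S = univ
  · subst hS
    exact ⟨B, hBF, hB.isArborescence, hFB⟩
  have hrS : r ∉ Sᶜ := notMem_compl.2 hB.root_mem
  obtain ⟨a, haFB, hhS, htS, ha⟩ := exists_arc_forall_enters_lt_inDeg
    (nonempty_of_ne_empty (by rwa [Ne, compl_eq_empty_iff])) hFB fun X hXS hX => by
      rw [inDeg_sdiff_of_disjoint hB.head_mem (subset_compl_iff_disjoint_right.1 hXS)]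
      exact hF X hX fun hr => hrS (hXS hr)
  refine exists_isArborescence_of_isPartialArborescence hF
    (insert_subset (mem_sdiff.1 haFB).1 hBF)
    (hB.insert_arc (notMem_compl.1 htS) (mem_compl.1 hhS)) fun Z hZ hrZ => ?_
  rw [sdiff_insert]
  by_cases hent : head a ∈ Z ∧ tail a ∉ Z
  · have := inDeg_le_inDeg_erase_add_one (tail := tail) (head := head) (F \ B) a Z
    have := ha Z hrZ hent.1 hent.2
    omega
  · rw [inDeg_erase_of_not_enters hent]
    exact hFB Z hZ hrZ
termination_by #Sᶜ
decreasing_by rw [compl_insert]; exact card_erase_lt_of_mem hhS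

theorem exists_isArborescence_isRootedConnected_sdiff {k : ℕ} {F : Finset A}
    (hF : IsRootedConnected tail head r (k + 1) F) :
    ∃ B ⊆ F, IsArborescence tail head r ↑B ∧ IsRootedConnected tail head r k (F \ B) :=
  exists_isArborescence_of_isPartialArborescence hF (empty_subset F) .empty
    fun X hX hrX => by simpa using (Nat.le_succ k).trans (hF X hX hrX)

theorem exists_arborescence_partition :
    ∀ (k : ℕ) (F : Finset A), (∀ a ∈ F, head a ≠ r) →
    (∀ v ≠ r, #{a ∈ F | head a = v} = k) → IsRootedConnected tail head r k F →
    ∃ f : Fin k → Set A, ⋃ i, f i = ↑F ∧ Pairwise (Disjoint on f) ∧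
      ∀ i, IsArborescence tail head r (f i)
  | 0, F, hFr, hdeg, _ => by
    have hF : F = ∅ := eq_empty_of_forall_notMem fun a ha => by
      have := hdeg (head a) (hFr a ha)
      rw [card_eq_zero, filter_eq_empty_iff] at this
      exact this ha rfl
    exact ⟨Fin.elim0, by simp [hF], fun i => i.elim0, fun i => i.elim0⟩
  | k + 1, F, hFr, hdeg, hF => by
    obtain ⟨B, hBF, hB, hFB⟩ := exists_isArborescence_isRootedConnected_sdiff hF
    have hdeg' : ∀ v ≠ r, #{a ∈ F \ B | head a = v} = k := fun v hv => by
      have : {a ∈ F \ B | head a = v} = {a ∈ F | head a = v} \ {a ∈ B | head a = v} := by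
        ext
        simp only [mem_filter, mem_sdiff]
        tauto
      rw [this, card_sdiff_of_subset (filter_subset_filter _ hBF), hdeg v hv,
        hB.card_filter_head_eq_one hv, Nat.add_sub_cancel]
    obtain ⟨f, hfU, hfd, hfA⟩ := exists_arborescence_partition k (F \ B)
      (fun a ha => hFr a (mem_sdiff.1 ha).1) hdeg' hFB
    refine ⟨Fin.cons ↑B f, ?_, pairwise_disjoint_cons (fun i => ?_) hfd, Fin.cases hB hfA⟩
    · rw [Set.iUnion_cons, hfU, coe_sdiff, Set.union_sdiff_cancel (coe_subset.2 hBF)]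
    · exact Set.disjoint_sdiff_right.mono_right (coe_sdiff F B ▸ hfU ▸ Set.subset_iUnion f i)

end Edmonds

theorem isRootedConnected_univ_of_partition {V A : Type*} [Fintype V] [DecidableEq V]
    [Fintype A] {tail head : A → V} {r : V} {k : ℕ}
    (hpc : ∀ P : Finpartition (univ : Finset V),
      k * (#P.parts - 1) ≤ {a : A | P.part (tail a) ≠ P.part (head a)}.ncard)
    (hr : ∀ a, head a ≠ r) (hv : ∀ v ≠ r, #{a | head a = v} = k) :
    IsRootedConnected tail head r k univ := by
  classical
  intro X hX hrX
  -- `X` together with the singletons of `Xᶜ`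
  let P : Finpartition (univ : Finset V) :=
    (⊥ : Finpartition Xᶜ).extend hX.ne_empty disjoint_compl_left compl_sup_eq_top
  have hP : #P.parts - 1 = #Xᶜ := by rw [Finpartition.card_extend, Finpartition.card_bot]; rfl
  have hPX : ∀ x ∈ X, P.part x = X := fun x hx => P.part_eq_of_mem (mem_insert_self _ _) hx
  have hcross : {a : A | P.part (tail a) ≠ P.part (head a)}.ncard ≤
      inDeg tail head univ X + #{a | head a ∈ Xᶜ} := by
    rw [Set.ncard_eq_toFinset_card', Set.toFinset_ofPred]
    refine (card_le_card fun a ha => ?_).trans (card_union_le _ _)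
    simp only [mem_filter, mem_union, mem_univ, true_and, mem_compl] at ha ⊢
    by_contra! h
    exact ha ((hPX _ (h.1 h.2)).trans (hPX _ h.2).symm)
  have hout : #{a | head a ∈ Xᶜ} = (#Xᶜ - 1) * k := by
    rw [← sum_card_fiberwise_eq_card_filter, ← sum_erase_add _ _ (mem_compl.2 hrX),
      sum_const_nat fun v hvX => hv v (ne_of_mem_erase hvX), card_erase_of_mem (mem_compl.2 hrX)]
    simp [hr]
  obtain ⟨c, hc⟩ : ∃ c, #Xᶜ = c + 1 :=
    Nat.exists_eq_add_one.2 (card_pos.2 ⟨r, mem_compl.2 hrX⟩)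
  have := (hpc P).trans hcross
  rw [hP, hout, hc, Nat.add_sub_cancel, mul_add_one, mul_comm c] at this
  omega

theorem partition_into_arborescences_general {V A : Type*} [Fintype V] [DecidableEq V] [Fintype A]
    (k : ℕ) (tail head : A → V) (r : V)
    (hpc : ∀ P : Finpartition (Finset.univ : Finset V),
      k * (P.parts.card - 1) ≤ {a : A | P.part (tail a) ≠ P.part (head a)}.ncard)
    (hr : {a : A | head a = r} = ∅)
    (hv : ∀ v : V, v ≠ r → {a : A | head a = v}.ncard = k) :
    (∃ f : Fin k → Set A, (⋃ i, f i) = Set.univ ∧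
      (Pairwise fun i j => Disjoint (f i) (f j)) ∧
      ∀ i, IsArborescence tail head r (f i)) ∧
    (∃ g : Fin k → Set A, (⋃ i, g i) = Set.univ ∧
      (Pairwise fun i j => Disjoint (g i) (g j)) ∧
      ∀ i, WeaklyConnects tail head (g i) ∧
        ∀ v : V, v ≠ r → ∃ a ∈ g i, head a = v) := by
  classical
  have hr' : ∀ a, head a ≠ r := fun a ha => Set.eq_empty_iff_forall_notMem.1 hr a ha
  have hv' : ∀ v ≠ r, #{a | head a = v} = k := fun v hvr => by
    rw [← hv v hvr, Set.ncard_eq_toFinset_card', Set.toFinset_ofPred]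
  obtain ⟨f, hfU, hfd, hfA⟩ := exists_arborescence_partition k univ (fun a _ => hr' a) hv'
    (isRootedConnected_univ_of_partition hpc hr' hv')
  rw [coe_univ] at hfU
  exact ⟨⟨f, hfU, hfd, hfA⟩, f, hfU, hfd,
    fun i => ⟨(hfA i).weaklyConnects, fun v hv => ((hfA i).1 v hv).exists⟩⟩

/-- Let `k > 0` and let `D = (V, A)` be a finite digraph (arcs given by
`tail` and `head`) with a vertex `r` such that the underlying undirected graph of `D` is
`k`-partition-connected (for every partition `P` of `V` into nonempty classes at least
`k(|P| - 1)` arcs join different classes of `P`), `r` has in-degree `0`, and every other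
vertex has in-degree exactly `k`.  Then `A` can be partitioned into `k` pairwise
arc-disjoint spanning arborescences rooted at `r`; in particular, `A` can be partitioned
into `k` weakly connected spanning subgraphs in each of which every vertex `v ∈ V - r`
has positive in-degree. -/
theorem partition_into_arborescences {V A : Type*} [Fintype V] [DecidableEq V] [Fintype A]
    (k : ℕ) (hk : 0 < k) (tail head : A → V) (r : V)
    (hpc : ∀ P : Finpartition (Finset.univ : Finset V),
      k * (P.parts.card - 1) ≤ {a : A | P.part (tail a) ≠ P.part (head a)}.ncard)
    (hr : {a : A | head a = r} = ∅)
    (hv : ∀ v : V, v ≠ r → {a : A | head a = v}.ncard = k) :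
    (∃ f : Fin k → Set A, (⋃ i, f i) = Set.univ ∧
      (Pairwise fun i j => Disjoint (f i) (f j)) ∧
      ∀ i, IsArborescence tail head r (f i)) ∧
    (∃ g : Fin k → Set A, (⋃ i, g i) = Set.univ ∧
      (Pairwise fun i j => Disjoint (g i) (g j)) ∧
      ∀ i, WeaklyConnects tail head (g i) ∧
        ∀ v : V, v ≠ r → ∃ a ∈ g i, head a = v) :=
  partition_into_arborescences_general k tail head r hpc hr hv

end ArborescenceStmt
end
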